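/- arXiv:2305.17612 — 2 statements merged into one kernel-verified Lean document; each statement's English description precedes it below -/
import Mathlib

section
/- Let P = {x ∈ ℝⁿ | ⟨aᵢ, x⟩ ≤ bᵢ for i = 1,…,m} be a nonempty convex polyhedron, where aᵢ ∈ ℝⁿ and bᵢ ∈ ℝ. If v ∈ pos{a₁,…,aₘ} := {Σᵢ λᵢaᵢ | λ₁ ≥ 0,…,λₘ ≥ 0}, then σ_P(v) = min{Σᵢ λᵢbᵢ | λ₁ ≥ 0,…,λₘ ≥ 0, Σᵢ λᵢaᵢ = v}, and the minimum is attained. If v ∉ pos{a₁,…,aₘ}, then σ_P(v) = +∞. -/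
noncomputable section

/-- Euclidean pairing `⟨u, x⟩ = ∑ i, u i * x i` on `ℝⁿ`. -/
def sdot {n : ℕ} (u x : Fin n → ℝ) : ℝ := ∑ i, u i * x i

/-- Support function of `Ω ⊆ ℝⁿ`, with values in `ℝ ∪ {±∞}`. -/
def suppFn {n : ℕ} (Ω : Set (Fin n → ℝ)) (v : Fin n → ℝ) : EReal :=
  sSup ((fun x => ((sdot v x : ℝ) : EReal)) '' Ω)


section Aux

open Finset
open scoped InnerProductSpace

variable {E : Type*} [NormedAddCommGroup E] [InnerProductSpace ℝ E]
variable {ι : Type*} [Fintype ι]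

lemma sum_extend_zero [DecidableEq ι] (a : ι → E) (s : Finset ι) (g : {i // i ∈ s} → ℝ) :
    ∑ i, (if h : i ∈ s then g ⟨i, h⟩ else 0) • a i = ∑ i : {i // i ∈ s}, g i • a i := by
  rw [← Finset.sum_subset s.subset_univ (by intro x _ hx; simp [hx])]
  rw [← Finset.sum_coe_sort s (fun i => (if h : i ∈ s then g ⟨i, h⟩ else 0) • a i)]
  congr 1
  ext i
  rw [dif_pos i.2]

lemma reduce_step [DecidableEq ι] (a : ι → E) (l : ι → ℝ) (hl : ∀ i, 0 ≤ l i) (μ : ι → ℝ)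
    (hμsum : ∑ i, μ i • a i = 0) (hμ0 : ∀ i, l i = 0 → μ i = 0) (hpos : ∃ i, 0 < μ i) :
    ∃ l' : ι → ℝ, (∀ i, 0 ≤ l' i) ∧ ∑ i, l' i • a i = ∑ i, l i • a i ∧
      ∃ i₀, l i₀ ≠ 0 ∧ l' i₀ = 0 ∧ ∀ i, l' i ≠ 0 → l i ≠ 0 := by
  classical
  obtain ⟨i₀, hi₀mem, hi₀min⟩ :=
    Finset.exists_min_image (univ.filter (fun i => 0 < μ i)) (fun i => l i / μ i)
      (by obtain ⟨i, hi⟩ := hpos; exact ⟨i, by simp [hi]⟩)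
  have hμi₀ : 0 < μ i₀ := by simpa using hi₀mem
  set t := l i₀ / μ i₀ with ht
  have ht0 : 0 ≤ t := div_nonneg (hl i₀) hμi₀.le
  refine ⟨fun i => l i - t * μ i, ?_, ?_, i₀, ?_, ?_, ?_⟩
  · intro i
    show (0:ℝ) ≤ l i - t * μ i
    rcases le_or_gt (μ i) 0 with h | h
    · have : t * μ i ≤ 0 := mul_nonpos_of_nonneg_of_nonpos ht0 h
      linarith [hl i]
    · have hmem : i ∈ univ.filter (fun i => 0 < μ i) := by simp [h]
      have h2 := hi₀min i hmem
      have := (le_div_iff₀ h).mp h2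
      linarith
  · have : ∑ i, (l i - t * μ i) • a i = ∑ i, l i • a i - t • ∑ i, μ i • a i := by
      rw [Finset.smul_sum]
      rw [← Finset.sum_sub_distrib]
      congr 1
      ext i
      rw [sub_smul, smul_smul]
    rw [this, hμsum, smul_zero, sub_zero]
  · intro h
    exact (ne_of_gt hμi₀) (hμ0 i₀ h)
  · show l i₀ - t * μ i₀ = 0
    rw [ht]
    field_simp
    ring
  · intro i hi
    intro h
    exact hi (show l i - t * μ i = 0 by rw [h, hμ0 i h, mul_zero, sub_zero])

/-- Carathéodory for cones. -/
lemma cone_caratheodory [DecidableEq ι] (a : ι → E) (l : ι → ℝ) (hl : ∀ i, 0 ≤ l i) :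
    ∃ s : Finset ι, LinearIndependent ℝ (fun i : {i // i ∈ s} => a i) ∧
      ∃ l' : ι → ℝ, (∀ i, 0 ≤ l' i) ∧ (∀ i ∉ s, l' i = 0) ∧
        ∑ i, l' i • a i = ∑ i, l i • a i := by
  classical
  set x := ∑ i, l i • a i with hx
  clear_value x
  obtain ⟨N, hN⟩ : ∃ N, (univ.filter (fun i => l i ≠ 0)).card ≤ N := ⟨_, le_refl _⟩
  induction N generalizing l with
  | zero =>
    refine ⟨∅, linearIndependent_empty_type, l, hl, ?_, hx.symm ▸ rfl⟩
    intro i _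
    by_contra h
    have : i ∈ univ.filter (fun i => l i ≠ 0) := by simp [h]
    have := Finset.card_pos.mpr ⟨i, this⟩
    omega
  | succ N ih =>
    set s := univ.filter (fun i => l i ≠ 0) with hs
    by_cases hli : LinearIndependent ℝ (fun i : {i // i ∈ s} => a i)
    · refine ⟨s, hli, l, hl, ?_, hx.symm ▸ rfl⟩
      intro i hi
      by_contra h
      exact hi (by simp [hs, h])
    · obtain ⟨g, hg0, ⟨j, hgj⟩⟩ := Fintype.not_linearIndependent_iff.mp hli
      set μ : ι → ℝ := fun i => if h : i ∈ s then g ⟨i, h⟩ else 0 with hμ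
      have hμsum : ∑ i, μ i • a i = 0 := by
        rw [hμ, sum_extend_zero a s g]; exact hg0
      have hμj : μ (j : ι) ≠ 0 := by
        show (if h : (j:ι) ∈ s then g ⟨j, h⟩ else 0) ≠ 0
        rw [dif_pos j.2]
        simpa using hgj
      have hμ0 : ∀ i, l i = 0 → μ i = 0 := by
        intro i hi
        have : i ∉ s := by simp [hs, hi]
        simp [hμ, dif_neg this]
      have key : ∀ ν : ι → ℝ, (∑ i, ν i • a i = 0) → (∀ i, l i = 0 → ν i = 0) →
          (∃ i, 0 < ν i) → _ := fun ν h1 h2 h3 => reduce_step a l hl ν h1 h2 h3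
      have step : ∃ l' : ι → ℝ, (∀ i, 0 ≤ l' i) ∧ ∑ i, l' i • a i = ∑ i, l i • a i ∧
          ∃ i₀, l i₀ ≠ 0 ∧ l' i₀ = 0 ∧ ∀ i, l' i ≠ 0 → l i ≠ 0 := by
        rcases lt_or_ge 0 (μ j) with hpos | hneg
        · exact reduce_step a l hl μ hμsum hμ0 ⟨j, hpos⟩
        · refine reduce_step a l hl (-μ) (by simpa using hμsum)
            (fun i hi => by simp [hμ0 i hi]) ⟨j, ?_⟩
          simpa using lt_of_le_of_ne hneg hμj
      obtain ⟨l', hl', hsum', i₀, hi₀, hi₀', hsupp⟩ := step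
      have hcard : (univ.filter (fun i => l' i ≠ 0)).card ≤ N := by
        have hsub : univ.filter (fun i => l' i ≠ 0) ⊆ s.erase i₀ := by
          intro i hi
          simp only [mem_filter, mem_univ, true_and] at hi
          refine Finset.mem_erase.mpr ⟨?_, by simp [hs, hsupp i hi]⟩
          intro h
          exact hi (h ▸ hi₀')
        have h1 := Finset.card_le_card hsub
        have h2 : i₀ ∈ s := by simp [hs, hi₀]
        have h3 := Finset.card_erase_of_mem h2
        omega
      exact ih l' hl' (hx ▸ hsum'.symm) hcard

def coneSet (a : ι → E) : Set E := {x | ∃ l : ι → ℝ, (∀ i, 0 ≤ l i) ∧ ∑ i, l i • a i = x}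

lemma isClosed_coneSet [FiniteDimensional ℝ E] (a : ι → E) : IsClosed (coneSet a) := by
  classical
  have key : coneSet a =
      ⋃ s : {s : Finset ι // LinearIndependent ℝ (fun i : {i // i ∈ s} => a i)},
        (Fintype.linearCombination ℝ (fun i : {i // i ∈ s.1} => a i)) ''
          {l | ∀ i, 0 ≤ l i} := by
    ext x
    simp only [Set.mem_iUnion, Set.mem_image]
    constructor
    · rintro ⟨l, hl, rfl⟩
      obtain ⟨s, hli, l', hl', hl'0, hsum⟩ := cone_caratheodory a l hl
      refine ⟨⟨s, hli⟩, fun i => l' i, fun i => hl' i, ?_⟩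
      rw [Fintype.linearCombination_apply]
      rw [← hsum]
      rw [← sum_extend_zero a s (fun i : {i // i ∈ s} => l' i)]
      congr 1
      ext i
      by_cases h : i ∈ s
      · rw [dif_pos h]
      · rw [dif_neg h, hl'0 i h]
    · rintro ⟨s, g, hg, rfl⟩
      refine ⟨fun i => if h : i ∈ s.1 then g ⟨i, h⟩ else 0, ?_, ?_⟩
      · intro i
        show 0 ≤ if h : i ∈ s.1 then g ⟨i, h⟩ else 0
        by_cases h : i ∈ s.1
        · rw [dif_pos h]; exact hg _
        · rw [dif_neg h]
      · rw [sum_extend_zero a s.1 g, Fintype.linearCombination_apply]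
  rw [key]
  apply isClosed_iUnion_of_finite
  intro s
  have hinj : Function.Injective
      (Fintype.linearCombination ℝ (fun i : {i // i ∈ s.1} => a i)) := by
    rw [← LinearMap.ker_eq_bot]
    rw [LinearMap.ker_eq_bot']
    intro g hg
    rw [Fintype.linearCombination_apply] at hg
    ext i
    exact Fintype.linearIndependent_iff.mp s.2 g hg i
  have hce := LinearMap.isClosedEmbedding_of_injective
    (LinearMap.ker_eq_bot.mpr hinj)
  apply hce.isClosedMap
  have : {l : {i // i ∈ s.1} → ℝ | ∀ i, 0 ≤ l i} = ⋂ i, {l | 0 ≤ l i} := by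
    ext; simp [Set.mem_iInter]
  rw [this]
  exact isClosed_iInter fun i => isClosed_le continuous_const (continuous_apply i)

open scoped InnerProductSpace in
/-- Farkas lemma (cone version). -/
lemma farkas_cone [FiniteDimensional ℝ E] (a : ι → E) (v : E)
    (hv : v ∉ coneSet a) :
    ∃ y : E, (∀ i, ⟪a i, y⟫_ℝ ≤ 0) ∧ 0 < ⟪v, y⟫_ℝ := by
  classical
  haveI : CompleteSpace E := FiniteDimensional.complete ℝ E
  set K : ConvexCone ℝ E :=
    { carrier := coneSet a
      smul_mem' := by
        rintro c hc x ⟨l, hl, rfl⟩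
        exact ⟨fun i => c • l i, fun i => mul_nonneg hc.le (hl i), by
          rw [Finset.smul_sum]; congr 1; ext i; rw [smul_assoc]⟩
      add_mem' := by
        rintro x ⟨l, hl, rfl⟩ y ⟨l', hl', rfl⟩
        exact ⟨fun i => l i + l' i, fun i => add_nonneg (hl i) (hl' i), by
          rw [← Finset.sum_add_distrib]; congr 1; ext i; rw [add_smul]⟩ } with hK
  have hne : (K : Set E).Nonempty := ⟨0, ⟨fun _ => 0, fun _ => le_refl _, by simp⟩⟩
  have hcl : IsClosed (K : Set E) := isClosed_coneSet a
  obtain ⟨y, hy1, hy2⟩ : ∃ y, (∀ x ∈ (K : Set E), 0 ≤ ⟪x, y⟫_ℝ) ∧ ⟪y, v⟫_ℝ < 0 := by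
    let C : ProperCone ℝ E :=
      { carrier := coneSet a
        add_mem' := fun hx hy => K.add_mem' hx hy
        zero_mem' := ⟨fun _ => 0, fun _ => le_refl _, by simp⟩
        smul_mem' := by
          rintro c x ⟨l, hl, rfl⟩
          exact ⟨fun i => (c : ℝ) * l i, fun i => mul_nonneg c.2 (hl i), by
            rw [Finset.smul_sum]; congr 1; ext i; rw [mul_smul]; rfl⟩
        isClosed' := hcl }
    obtain ⟨y, h1, h2⟩ := ProperCone.hyperplane_separation' C hv
    exact ⟨y, h1, by rwa [real_inner_comm]⟩
  refine ⟨-y, fun i => ?_, ?_⟩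
  · rw [inner_neg_right, neg_nonpos]
    refine hy1 (a i) ⟨Pi.single i 1, fun j => by
      by_cases h : j = i <;> simp [Pi.single_apply, h], ?_⟩
    simp [Pi.single_apply, ite_smul]
  · rw [inner_neg_right, ← neg_zero, neg_lt_neg_iff, real_inner_comm]
    exact hy2

/-- Affine Farkas lemma. -/
lemma farkas_affine [FiniteDimensional ℝ E] (a : ι → E) (b : ι → ℝ) (v : E) (c : ℝ)
    (x₀ : E) (hx₀ : ∀ i, ⟪a i, x₀⟫_ℝ ≤ b i)
    (hb : ∀ x : E, (∀ i, ⟪a i, x⟫_ℝ ≤ b i) → ⟪v, x⟫_ℝ ≤ c) :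
    ∃ l : ι → ℝ, (∀ i, 0 ≤ l i) ∧ ∑ i, l i • a i = v ∧ ∑ i, l i * b i ≤ c := by
  classical
  set F := WithLp 2 (E × ℝ) with hF
  haveI : FiniteDimensional ℝ F := by
    show FiniteDimensional ℝ (WithLp 2 (E × ℝ)); infer_instance
  set eq := WithLp.equiv 2 (E × ℝ) with heq
  set g : ι ⊕ Unit → F := Sum.elim (fun i => eq.symm (a i, b i))
    (fun _ => eq.symm (0, 1)) with hg
  set w : F := eq.symm (v, c) with hw
  set π₁ : F →ₗ[ℝ] E := (LinearMap.fst ℝ E ℝ).comp (WithLp.linearEquiv 2 ℝ (E × ℝ)).toLinearMap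
    with hπ₁
  set π₂ : F →ₗ[ℝ] ℝ := (LinearMap.snd ℝ E ℝ).comp (WithLp.linearEquiv 2 ℝ (E × ℝ)).toLinearMap
    with hπ₂
  have hπ₁g : ∀ i, π₁ (g (Sum.inl i)) = a i := fun i => rfl
  have hπ₂g : ∀ i, π₂ (g (Sum.inl i)) = b i := fun i => rfl
  by_cases hmem : w ∈ coneSet g
  · obtain ⟨l, hl, hsum⟩ := hmem
    refine ⟨fun i => l (Sum.inl i), fun i => hl _, ?_, ?_⟩
    · have h1 := congrArg π₁ hsum
      rw [map_sum] at h1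
      simp only [map_smul] at h1
      rw [Fintype.sum_sum_type] at h1
      have : π₁ w = v := rfl
      rw [this] at h1
      have hz : ∀ u : Unit, l (Sum.inr u) • π₁ (g (Sum.inr u)) = 0 := by
        intro u
        have : π₁ (g (Sum.inr u)) = 0 := rfl
        rw [this, smul_zero]
      rw [Finset.sum_congr rfl (fun u _ => hz u), Finset.sum_const_zero, add_zero] at h1
      simpa only [hπ₁g] using h1
    · have h2 := congrArg π₂ hsum
      rw [map_sum] at h2
      simp only [map_smul] at h2
      rw [Fintype.sum_sum_type] at h2
      have : π₂ w = c := rfl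
      rw [this] at h2
      have hz : ∀ u : Unit, l (Sum.inr u) • π₂ (g (Sum.inr u)) = l (Sum.inr u) := by
        intro u
        have : π₂ (g (Sum.inr u)) = 1 := rfl
        rw [this, smul_eq_mul, mul_one]
      rw [Finset.sum_congr rfl (fun u _ => hz u)] at h2
      have h3 : ∑ i, l (Sum.inl i) * b i ≤
          ∑ i, l (Sum.inl i) • π₂ (g (Sum.inl i)) + ∑ _u : Unit, l (Sum.inr _u) := by
        simp only [hπ₂g, smul_eq_mul]
        have : (0:ℝ) ≤ ∑ _u : Unit, l (Sum.inr _u) :=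
          Finset.sum_nonneg fun u _ => hl _
        linarith
      rw [h2] at h3
      exact h3
  · exfalso
    obtain ⟨y, hy1, hy2⟩ := farkas_cone g w hmem
    -- decompose y
    set yE : E := π₁ y with hyE
    set t : ℝ := π₂ y with hyt
    have hinner : ∀ (u : E) (s : ℝ), ⟪eq.symm (u, s), y⟫_ℝ = ⟪u, yE⟫_ℝ + s * t := by
      intro u s
      rw [WithLp.prod_inner_apply, mul_comm]
      rfl
    have hAi : ∀ i, ⟪a i, yE⟫_ℝ + b i * t ≤ 0 := fun i => by
      have := hy1 (Sum.inl i); rwa [hg, Sum.elim_inl, hinner] at this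
    have hT : t ≤ 0 := by
      have := hy1 (Sum.inr ());
      rw [hg, Sum.elim_inr, hinner] at this
      simpa using this
    have hV : 0 < ⟪v, yE⟫_ℝ + c * t := by
      have := hy2; rwa [hw, hinner] at this
    rcases lt_or_eq_of_le hT with ht | ht
    · -- t < 0 : the point x := (-t)⁻¹ • yE is in P with value > c
      set x : E := (-t)⁻¹ • yE with hx
      have hpos : (0:ℝ) < -t := by linarith
      have hxP : ∀ i, ⟪a i, x⟫_ℝ ≤ b i := by
        intro i
        rw [hx, real_inner_smul_right]
        rw [inv_mul_le_iff₀ hpos]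
        have := hAi i
        nlinarith
      have := hb x hxP
      rw [hx, real_inner_smul_right, inv_mul_le_iff₀ hpos] at this
      nlinarith
    · -- t = 0 : direction of unboundedness
      rw [ht] at hAi hV
      simp only [mul_zero, add_zero] at hAi hV
      set s : ℝ := (c + 1 - ⟪v, x₀⟫_ℝ) / ⟪v, yE⟫_ℝ with hs
      have hs0 : 0 ≤ s ∨ s < 0 := le_or_gt 0 s |>.imp id id
      -- use max 0 s
      set s' : ℝ := max s 0 with hs'
      have hxP : ∀ i, ⟪a i, x₀ + s' • yE⟫_ℝ ≤ b i := by
        intro i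
        rw [inner_add_right, real_inner_smul_right]
        have h1 := hAi i
        have h2 : s' * ⟪a i, yE⟫_ℝ ≤ 0 :=
          mul_nonpos_of_nonneg_of_nonpos (le_max_right s 0) h1
        linarith [hx₀ i]
      have hle := hb _ hxP
      rw [inner_add_right, real_inner_smul_right] at hle
      have hsge : s ≤ s' := le_max_left s 0
      have : c + 1 - ⟪v, x₀⟫_ℝ ≤ s' * ⟪v, yE⟫_ℝ := by
        rw [hs] at hsge
        have := (div_le_iff₀ hV).mp hsge
        linarith
      linarith

lemma sdot_eq_inner {n : ℕ} (u x : Fin n → ℝ) :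
    sdot u x = @inner ℝ (EuclideanSpace ℝ (Fin n)) _ (WithLp.toLp 2 u) (WithLp.toLp 2 x) := by
  rw [PiLp.inner_apply]
  simp [sdot, mul_comm]

lemma weak_dual {n m : ℕ} (a : Fin m → Fin n → ℝ) (b : Fin m → ℝ) (μ : Fin m → ℝ)
    (v x : Fin n → ℝ) (hμ : ∀ i, 0 ≤ μ i) (hv : ∑ i, μ i • a i = v)
    (hx : ∀ i, sdot (a i) x ≤ b i) :
    sdot v x ≤ ∑ i, μ i * b i := by
  have h : sdot v x = ∑ i, μ i * sdot (a i) x := by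
    rw [← hv]
    simp only [sdot, Finset.sum_apply, Pi.smul_apply, smul_eq_mul, Finset.mul_sum,
      Finset.sum_mul]
    rw [Finset.sum_comm]
    exact Finset.sum_congr rfl fun i _ => Finset.sum_congr rfl fun j _ => by ring
  rw [h]
  exact Finset.sum_le_sum fun i _ => mul_le_mul_of_nonneg_left (hx i) (hμ i)


end Aux

/-- Support function of a nonempty convex polyhedron
`P = {x | ⟨aᵢ, x⟩ ≤ bᵢ, i = 1,…,m}`: if `v ∈ pos{a₁,…,aₘ}` then
`σ_P(v) = min {∑ λᵢ bᵢ | λ ≥ 0, ∑ λᵢ aᵢ = v}` (the minimum being attained),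
and if `v ∉ pos{a₁,…,aₘ}` then `σ_P(v) = +∞`. -/
theorem support_function_polyhedron {n m : ℕ} (a : Fin m → (Fin n → ℝ)) (b : Fin m → ℝ)
    (P : Set (Fin n → ℝ)) (hP : P = {x | ∀ i, sdot (a i) x ≤ b i}) (hne : P.Nonempty)
    (v : Fin n → ℝ) :
    ((∃ lam : Fin m → ℝ, (∀ i, 0 ≤ lam i) ∧ ∑ i, lam i • a i = v) →
      ∃ lam : Fin m → ℝ, (∀ i, 0 ≤ lam i) ∧ ∑ i, lam i • a i = v ∧
        suppFn P v = ((∑ i, lam i * b i : ℝ) : EReal) ∧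
        (∀ mu : Fin m → ℝ, (∀ i, 0 ≤ mu i) → ∑ i, mu i • a i = v →
          ∑ i, lam i * b i ≤ ∑ i, mu i * b i)) ∧
    ((¬ ∃ lam : Fin m → ℝ, (∀ i, 0 ≤ lam i) ∧ ∑ i, lam i • a i = v) →
      suppFn P v = ⊤) := by

  subst hP
  obtain ⟨x₀, hx₀⟩ := hne
  have hx₀' : ∀ i, sdot (a i) x₀ ≤ b i := hx₀
  -- Farkas with a bound
  have farkas' : ∀ c : ℝ, (∀ x, (∀ i, sdot (a i) x ≤ b i) → sdot v x ≤ c) →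
      ∃ lam : Fin m → ℝ, (∀ i, 0 ≤ lam i) ∧ ∑ i, lam i • a i = v ∧
        ∑ i, lam i * b i ≤ c := by
    intro c hc
    obtain ⟨l, h1, h2, h3⟩ := farkas_affine (E := EuclideanSpace ℝ (Fin n))
      (fun i => WithLp.toLp 2 (a i)) b (WithLp.toLp 2 v) c (WithLp.toLp 2 x₀)
      (fun i => by rw [← sdot_eq_inner]; exact hx₀' i)
      (fun x hx => by
        have := hc (WithLp.ofLp x) (fun i => by rw [sdot_eq_inner, WithLp.toLp_ofLp]; exact hx i)
        rwa [sdot_eq_inner, WithLp.toLp_ofLp] at this)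
    exact ⟨l, h1, by simpa using congrArg WithLp.ofLp h2, h3⟩
  have hmem : ((sdot v x₀ : ℝ) : EReal) ∈
      (fun x => ((sdot v x : ℝ) : EReal)) '' {x | ∀ i, sdot (a i) x ≤ b i} :=
    ⟨x₀, hx₀, rfl⟩
  have hbot : suppFn {x | ∀ i, sdot (a i) x ≤ b i} v ≠ ⊥ := by
    intro h
    have := le_sSup hmem
    rw [show sSup ((fun x => ((sdot v x : ℝ) : EReal)) '' {x | ∀ i, sdot (a i) x ≤ b i})
      = suppFn {x | ∀ i, sdot (a i) x ≤ b i} v from rfl, h, le_bot_iff] at this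
    exact EReal.coe_ne_bot _ this
  have getc : suppFn {x | ∀ i, sdot (a i) x ≤ b i} v ≠ ⊤ →
      ∃ lam : Fin m → ℝ, (∀ i, 0 ≤ lam i) ∧ ∑ i, lam i • a i = v ∧
        suppFn {x | ∀ i, sdot (a i) x ≤ b i} v = ((∑ i, lam i * b i : ℝ) : EReal) ∧
        ∀ x, (∀ i, sdot (a i) x ≤ b i) →
          sdot v x ≤ ∑ i, lam i * b i := by
    intro htop
    set c : ℝ := (suppFn {x | ∀ i, sdot (a i) x ≤ b i} v).toReal with hcdef
    have hc : suppFn {x | ∀ i, sdot (a i) x ≤ b i} v = (c : EReal) :=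
      (EReal.coe_toReal htop hbot).symm
    have hbound : ∀ x, (∀ i, sdot (a i) x ≤ b i) → sdot v x ≤ c := by
      intro x hx
      have hxmem : ((sdot v x : ℝ) : EReal) ∈
          (fun x => ((sdot v x : ℝ) : EReal)) '' {x | ∀ i, sdot (a i) x ≤ b i} :=
        ⟨x, hx, rfl⟩
      have hle : ((sdot v x : ℝ) : EReal) ≤ suppFn {x | ∀ i, sdot (a i) x ≤ b i} v :=
        le_sSup hxmem
      rw [hc] at hle
      exact_mod_cast hle
    obtain ⟨lam, h1, h2, h3⟩ := farkas' c hbound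
    have hge : c ≤ ∑ i, lam i * b i := by
      have hub : suppFn {x | ∀ i, sdot (a i) x ≤ b i} v ≤ ((∑ i, lam i * b i : ℝ) : EReal) := by
        apply sSup_le
        rintro z ⟨x, hx, rfl⟩
        show ((sdot v x : ℝ) : EReal) ≤ ((∑ i, lam i * b i : ℝ) : EReal)
        exact_mod_cast weak_dual a b lam v x h1 h2 hx
      rw [hc] at hub
      exact_mod_cast hub
    have heq : (∑ i, lam i * b i) = c := le_antisymm h3 hge
    refine ⟨lam, h1, h2, by rw [hc, heq], fun x hx => heq ▸ hbound x hx⟩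
  constructor
  · rintro ⟨l0, hl0, hsum0⟩
    have htop : suppFn {x | ∀ i, sdot (a i) x ≤ b i} v ≠ ⊤ := by
      intro h
      have hub : suppFn {x | ∀ i, sdot (a i) x ≤ b i} v ≤ ((∑ i, l0 i * b i : ℝ) : EReal) := by
        apply sSup_le
        rintro z ⟨x, hx, rfl⟩
        show ((sdot v x : ℝ) : EReal) ≤ ((∑ i, l0 i * b i : ℝ) : EReal)
        exact_mod_cast weak_dual a b l0 v x hl0 hsum0 hx
      rw [h] at hub
      exact (EReal.coe_ne_top _) (top_le_iff.mp hub)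
    obtain ⟨lam, h1, h2, h3, h4⟩ := getc htop
    refine ⟨lam, h1, h2, h3, ?_⟩
    intro mu hmu hmusum
    -- min property : ∑ lam b = c ≤ ∑ mu b by weak duality sup bound
    have hub : suppFn {x | ∀ i, sdot (a i) x ≤ b i} v ≤ ((∑ i, mu i * b i : ℝ) : EReal) := by
      apply sSup_le
      rintro z ⟨x, hx, rfl⟩
      show ((sdot v x : ℝ) : EReal) ≤ ((∑ i, mu i * b i : ℝ) : EReal)
      exact_mod_cast weak_dual a b mu v x hmu hmusum hx
    rw [h3] at hub
    exact_mod_cast hub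
  · intro hno
    by_contra htop
    obtain ⟨lam, h1, h2, _, _⟩ := getc htop
    exact hno ⟨lam, h1, h2⟩


end
end

section
/- Let F₁, F₂: ℝⁿ ⇉ ℝᵖ be set-valued mappings and (u, v) ∈ ℝⁿ × ℝᵖ. Then always (F₁+F₂)*(u, v) ≤ inf{F₁*(u₁, v) + F₂*(u₂, v) | u₁ + u₂ = u}. Suppose one of the following holds: (a) F₁ and F₂ are convex and ri(dom F₁) ∩ ri(dom F₂) ≠ ∅; (b) F₁ is convex, F₂ is polyhedral convex, and ri(dom F₁) ∩ dom F₂ ≠ ∅; (c) F₁ and F₂ are polyhedral convex and dom F₁ ∩ dom F₂ ≠ ∅. Then (F₁+F₂)*(u, v) = inf{F₁*(u₁, v) + F₂*(u₂, v) | u₁ + u₂ = u}, and the infimum is attained whenever (F₁+F₂)*(u, v) ∈ ℝ. -/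
open Pointwise

noncomputable section

/-- Fenchel conjugate of a set-valued mapping `F : ℝⁿ ⇉ ℝᵖ`. -/
def svConj {n p : ℕ} (F : (Fin n → ℝ) → Set (Fin p → ℝ))
    (u : Fin n → ℝ) (v : Fin p → ℝ) : EReal :=
  sSup ((fun q : (Fin n → ℝ) × (Fin p → ℝ) => ((sdot u q.1 + sdot v q.2 : ℝ) : EReal)) ''
    {q : (Fin n → ℝ) × (Fin p → ℝ) | q.2 ∈ F q.1})

/-- Effective domain of a set-valued mapping. -/
def sdom {n p : ℕ} (F : (Fin n → ℝ) → Set (Fin p → ℝ)) : Set (Fin n → ℝ) :=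
  {x | (F x).Nonempty}

/-- A polyhedral convex set-valued mapping: the graph is a finite intersection of
half-spaces in `ℝⁿ × ℝᵖ`. -/
def IsPolyMap {n p : ℕ} (F : (Fin n → ℝ) → Set (Fin p → ℝ)) : Prop :=
  ∃ (m : ℕ) (a : Fin m → (Fin n → ℝ)) (c : Fin m → (Fin p → ℝ)) (b : Fin m → ℝ),
    {q : (Fin n → ℝ) × (Fin p → ℝ) | q.2 ∈ F q.1} =
      {q | ∀ i, sdot (a i) q.1 + sdot (c i) q.2 ≤ b i}


namespace SumRule
open Set Finset Module

section RI
variable {E : Type*} [NormedAddCommGroup E] [NormedSpace ℝ E]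

/-- Characterization of membership in the intrinsic interior. -/
theorem mem_ri_iff {C : Set E} {z : E} :
    z ∈ intrinsicInterior ℝ C ↔ z ∈ affineSpan ℝ C ∧
      ∃ U : Set E, IsOpen U ∧ z ∈ U ∧ U ∩ (affineSpan ℝ C : Set E) ⊆ C := by
  constructor
  · rintro ⟨⟨z, hz⟩, hmem, rfl⟩
    refine ⟨hz, ?_⟩
    rw [mem_interior] at hmem
    obtain ⟨t, htsub, htopen, hzt⟩ := hmem
    obtain ⟨U, hUopen, hUeq⟩ := isOpen_induced_iff.mp htopen
    refine ⟨U, hUopen, ?_, ?_⟩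
    · have : (⟨z, hz⟩ : affineSpan ℝ C) ∈ t := hzt
      rw [← hUeq] at this
      exact this
    · rintro x ⟨hxU, hxspan⟩
      have : (⟨x, hxspan⟩ : affineSpan ℝ C) ∈ t := by
        rw [← hUeq]; exact hxU
      exact htsub this
  · rintro ⟨hzspan, U, hUopen, hzU, hsub⟩
    refine ⟨⟨z, hzspan⟩, mem_interior.mpr ⟨((↑) : affineSpan ℝ C → E) ⁻¹' U,
      fun w hw => hsub ⟨hw, w.2⟩, hUopen.preimage continuous_subtype_val, hzU⟩, rfl⟩

/-- From a relative interior point, one can move slightly past it away from any point of the set. -/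
theorem twosided {C : Set E} {z x : E} (hz : z ∈ intrinsicInterior ℝ C) (hx : x ∈ C) :
    ∃ ε : ℝ, 0 < ε ∧ z + ε • (z - x) ∈ C := by
  rw [mem_ri_iff] at hz
  obtain ⟨hzspan, U, hUopen, hzU, hsub⟩ := hz
  have hcont : Continuous fun ε : ℝ => z + ε • (z - x) := by
    exact continuous_const.add (continuous_id.smul continuous_const)
  have h0 : z + (0:ℝ) • (z - x) ∈ U := by simpa using hzU
  have hev : ∀ᶠ ε in nhds (0:ℝ), z + ε • (z - x) ∈ U := by
    have := hcont.tendsto 0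
    simp only [zero_smul, add_zero] at this
    exact this.eventually (hUopen.mem_nhds hzU)
  have hev' : ∀ᶠ ε in nhdsWithin (0:ℝ) (Set.Ioi 0), z + ε • (z - x) ∈ U :=
    hev.filter_mono nhdsWithin_le_nhds
  obtain ⟨ε, hmem, hεpos⟩ := (hev'.and (eventually_mem_nhdsWithin)).exists
  refine ⟨ε, hεpos, hsub ⟨hmem, ?_⟩⟩
  have := (affineSpan ℝ C).smul_vsub_vadd_mem ε hzspan (subset_affineSpan ℝ C hx) hzspan
  simpa [vsub_eq_sub, vadd_eq_add, add_comm] using this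

/-- A linear functional attaining its max over a convex set at a relative interior point
is constant on the set. -/
theorem ri_max {C : Set E} {φ : E →ₗ[ℝ] ℝ} {z : E} (hz : z ∈ intrinsicInterior ℝ C)
    (hmax : ∀ x ∈ C, φ x ≤ φ z) : ∀ x ∈ C, φ x = φ z := by
  intro x hx
  obtain ⟨ε, hεpos, hmem⟩ := twosided hz hx
  have h1 := hmax _ hmem
  rw [map_add, map_smul, map_sub, smul_eq_mul] at h1
  have h2 := hmax x hx
  nlinarith


/-- Proper separation of a convex set from a point not in its relative interior. -/
theorem ps_point [FiniteDimensional ℝ E] {C : Set E} (hC : Convex ℝ C) (hne : C.Nonempty)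
    (h0 : (0:E) ∉ intrinsicInterior ℝ C) :
    ∃ φ : E →ₗ[ℝ] ℝ, (∀ z ∈ C, φ z ≤ 0) ∧ ∃ zh ∈ C, φ zh < 0 := by
  by_cases hsp : (0:E) ∈ affineSpan ℝ C
  · -- 0 in the affine span; span is (as a set) the direction submodule S
    set S := (affineSpan ℝ C).direction with hSdef
    have hspan_eq : ((affineSpan ℝ C : Set E)) = (S : Set E) := by
      ext x
      constructor
      · intro hx
        have := AffineSubspace.vsub_mem_direction hx hsp
        simpa using this
      · intro hx
        have : (x : E) +ᵥ (0:E) ∈ affineSpan ℝ C := AffineSubspace.vadd_mem_of_mem_direction hx hsp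
        simpa using this
    have hCS : C ⊆ (S : Set E) := fun x hx => by
      rw [← hspan_eq]; exact subset_affineSpan ℝ C hx
    set C' : Set S := ((↑) : S → E) ⁻¹' C with hC'def
    have hC'conv : Convex ℝ C' := hC.linear_preimage S.subtype
    -- interior of C' is nonempty
    obtain ⟨z1, hz1⟩ := hne.intrinsicInterior hC
    have hz1span := (mem_ri_iff.mp hz1).1
    obtain ⟨U, hUopen, hz1U, hUsub⟩ := (mem_ri_iff.mp hz1).2
    have hz1S : z1 ∈ S := by
      have : z1 ∈ (S : Set E) := by rw [← hspan_eq]; exact hz1span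
      exact this
    have hz1int : (⟨z1, hz1S⟩ : S) ∈ interior C' := by
      rw [mem_interior]
      refine ⟨((↑) : S → E) ⁻¹' U, ?_, hUopen.preimage continuous_subtype_val, hz1U⟩
      rintro ⟨w, hwS⟩ hw
      have : w ∈ U ∩ (affineSpan ℝ C : Set E) := ⟨hw, by rw [hspan_eq]; exact hwS⟩
      exact hUsub this
    -- 0 is not in interior C'
    have h0S : (0:E) ∈ S := S.zero_mem
    have h0int : (⟨0, h0S⟩ : S) ∉ interior C' := by
      intro hmem
      apply h0
      rw [mem_interior] at hmem
      obtain ⟨t, htsub, htopen, h0t⟩ := hmem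
      obtain ⟨W, hWopen, hWeq⟩ := isOpen_induced_iff.mp htopen
      rw [mem_ri_iff]
      refine ⟨hsp, W, hWopen, ?_, ?_⟩
      · have : (⟨0, h0S⟩ : S) ∈ (((↑) : S → E) ⁻¹' W) := by rw [hWeq]; exact h0t
        exact this
      · rintro x ⟨hxW, hxspan⟩
        have hxS : x ∈ S := by
          have : x ∈ (S : Set E) := by rw [← hspan_eq]; exact hxspan
          exact this
        have : (⟨x, hxS⟩ : S) ∈ t := by rw [← hWeq]; exact hxW
        exact htsub this
    -- separate 0 from the open convex set interior C'
    obtain ⟨f, hf⟩ := geometric_hahn_banach_open_point hC'conv.interior isOpen_interior h0int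
    have hf0 : f (⟨0, h0S⟩ : S) = 0 := by
      rw [show (⟨0, h0S⟩ : S) = 0 from rfl, map_zero]
    rw [hf0] at hf
    -- f ≤ 0 on C' (C' ⊆ closure (interior C'))
    have hC'cl : ∀ x ∈ C', f x ≤ 0 := by
      intro x hx
      -- the combo path from z1 to x stays in the interior
      have hcombo : ∀ t : ℝ, 0 ≤ t → t < 1 →
          (1 - t) • (⟨z1, hz1S⟩ : S) + t • x ∈ interior C' := by
        intro t ht0 ht1
        exact hC'conv.combo_interior_closure_mem_interior hz1int
          (subset_closure hx) (by linarith) ht0 (by ring)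
      -- f < 0 on those combos; take the limit t → 1
      have hlim : Filter.Tendsto (fun t : ℝ => f ((1 - t) • (⟨z1, hz1S⟩ : S) + t • x))
          (nhdsWithin 1 (Set.Ico 0 1)) (nhds (f x)) := by
        have hcont : Continuous fun t : ℝ => f ((1 - t) • (⟨z1, hz1S⟩ : S) + t • x) := by
          fun_prop
        have := hcont.tendsto 1
        simp only [sub_self, zero_smul, one_smul, zero_add] at this
        exact this.mono_left nhdsWithin_le_nhds
      have hev : ∀ᶠ t in nhdsWithin (1:ℝ) (Set.Ico 0 1),
          f ((1 - t) • (⟨z1, hz1S⟩ : S) + t • x) ≤ 0 := by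
        filter_upwards [eventually_mem_nhdsWithin] with t ht
        exact (hf _ (hcombo t ht.1 ht.2)).le
      have : (nhdsWithin (1:ℝ) (Set.Ico 0 1)).NeBot := by
        apply mem_closure_iff_nhdsWithin_neBot.mp
        rw [closure_Ico (by norm_num : (0:ℝ) ≠ 1)]
        exact ⟨zero_le_one, le_refl 1⟩
      exact le_of_tendsto hlim hev
    -- extend to E by a linear projection
    obtain ⟨q, hq⟩ := Submodule.exists_isCompl S
    set π := Submodule.linearProjOfIsCompl S q hq
    refine ⟨(f : S →ₗ[ℝ] ℝ).comp π, ?_, ⟨z1, intrinsicInterior_subset hz1, ?_⟩⟩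
    · intro z hz
      have : π z = ⟨z, hCS hz⟩ := Submodule.linearProjOfIsCompl_apply_left hq ⟨z, hCS hz⟩
      simp only [LinearMap.comp_apply, this]
      exact hC'cl _ hz
    · have hmem : z1 ∈ C := intrinsicInterior_subset hz1
      have : π z1 = ⟨z1, hCS hmem⟩ := Submodule.linearProjOfIsCompl_apply_left hq ⟨z1, hCS hmem⟩
      simp only [LinearMap.comp_apply, this]
      exact hf _ hz1int
  · -- 0 not in the affine span: constant separation
    obtain ⟨x0, hx0⟩ := hne
    set W := (affineSpan ℝ C).direction
    have hx0W : x0 ∉ W := by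
      intro h
      apply hsp
      have : ((-1 : ℝ) • (x0 -ᵥ (0:E))) +ᵥ x0 ∈ affineSpan ℝ C := by
        apply AffineSubspace.vadd_mem_of_mem_direction
        · exact W.smul_mem _ (by simpa using h)
        · exact subset_affineSpan ℝ C hx0
      simpa using this
    have hWclosed : IsClosed (W : Set E) := Submodule.closed_of_finiteDimensional W
    obtain ⟨f, u, hfu, hux0⟩ := geometric_hahn_banach_closed_point W.convex hWclosed hx0W
    have hu0 : 0 < u := by
      have := hfu 0 W.zero_mem
      simpa using this
    have hfW : ∀ w ∈ W, f w = 0 := by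
      intro w hw
      by_contra hne0
      have := hfu ((2*u/(f w)) • w) (W.smul_mem _ hw)
      rw [map_smul, smul_eq_mul, div_mul_cancel₀ _ hne0] at this
      linarith
    have hfx0 : 0 < f x0 := lt_trans hu0 hux0
    refine ⟨(-(f x0)⁻¹) • (f : E →ₗ[ℝ] ℝ), ?_, ⟨x0, hx0, ?_⟩⟩
    · intro z hz
      have hzspan : z ∈ affineSpan ℝ C := subset_affineSpan ℝ C hz
      have hdir : z -ᵥ x0 ∈ W := AffineSubspace.vsub_mem_direction hzspan (subset_affineSpan ℝ C hx0)
      have hfz : f z = f x0 := by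
        have h0 := hfW _ hdir
        have : f (z - x0) = 0 := by simpa using h0
        rw [map_sub] at this
        linarith
      simp only [LinearMap.smul_apply, LinearMap.coe_coe, smul_eq_mul, hfz, neg_mul,
        inv_mul_cancel₀ (ne_of_gt hfx0)]
      norm_num
      rw [hfz]
      positivity
    · simp only [LinearMap.smul_apply, LinearMap.coe_coe, smul_eq_mul, neg_mul,
        inv_mul_cancel₀ (ne_of_gt hfx0)]
      norm_num
      positivity


/-- Carathéodory's theorem for cones: a conic combination can be realized using a
linearly independent subfamily. -/
theorem caratheodory_cone {ι : Type*} [Fintype ι] [DecidableEq ι] (M : ι → E) (q : E)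
    (h : ∃ l : ι → ℝ, (∀ i, 0 ≤ l i) ∧ ∑ i, l i • M i = q) :
    ∃ s : Finset ι, (LinearIndependent ℝ (fun i : s => M (i : ι))) ∧
      ∃ l : ι → ℝ, (∀ i, 0 ≤ l i) ∧ (∀ i ∉ s, l i = 0) ∧ ∑ i, l i • M i = q := by
  obtain ⟨l, hl0, hlsum⟩ := h
  -- strong induction on the cardinality of the support
  suffices H : ∀ N : ℕ, ∀ l : ι → ℝ, (Finset.univ.filter fun i => l i ≠ 0).card ≤ N →
      (∀ i, 0 ≤ l i) → ∑ i, l i • M i = q →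
      ∃ s : Finset ι, (LinearIndependent ℝ (fun i : s => M (i : ι))) ∧
        ∃ l : ι → ℝ, (∀ i, 0 ≤ l i) ∧ (∀ i ∉ s, l i = 0) ∧ ∑ i, l i • M i = q by
    exact H _ l le_rfl hl0 hlsum
  intro N
  induction N with
  | zero =>
    intro l hcard hl0 hlsum
    refine ⟨∅, linearIndependent_empty_type, l, hl0, ?_, hlsum⟩
    intro i _
    by_contra hne
    have : i ∈ Finset.univ.filter fun i => l i ≠ 0 := by simp [hne]
    have := Finset.card_pos.mpr ⟨i, this⟩
    omega
  | succ N ih =>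
    intro l hcard hl0 hlsum
    set s := Finset.univ.filter fun i => l i ≠ 0 with hsdef
    by_cases hindep : LinearIndependent ℝ (fun i : s => M (i : ι))
    · refine ⟨s, hindep, l, hl0, ?_, hlsum⟩
      intro i hi
      by_contra hne
      exact hi (by simp [hsdef, hne])
    · obtain ⟨g, hgsum, j0, hgj0⟩ := Fintype.not_linearIndependent_iff.mp hindep
      -- extend g to ι by zero
      set g' : ι → ℝ := fun i => if h : i ∈ s then g ⟨i, h⟩ else 0 with hg'def
      have hg'sum : ∑ i, g' i • M i = 0 := by
        rw [← Finset.sum_subset (Finset.subset_univ s)]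
        · rw [← hgsum, ← Finset.sum_attach s (fun i => g' i • M i)]
          apply Finset.sum_congr rfl
          intro i _
          simp [hg'def, i.2]
        · intro i _ hi
          simp [hg'def, hi]
      -- WLOG some coordinate of g' is positive
      have hwlog : ∀ g' : ι → ℝ, (∑ i, g' i • M i = 0) → (∃ i, 0 < g' i) →
          (∀ i, g' i ≠ 0 → i ∈ s) →
          ∃ s : Finset ι, (LinearIndependent ℝ (fun i : s => M (i : ι))) ∧
          ∃ l : ι → ℝ, (∀ i, 0 ≤ l i) ∧ (∀ i ∉ s, l i = 0) ∧ ∑ i, l i • M i = q := by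
        intro g' hg'sum ⟨iP, hiP⟩ hg'supp
        -- choose the minimizer of l i / g' i over positive coordinates
        set T := Finset.univ.filter fun i => 0 < g' i with hTdef
        have hTne : T.Nonempty := ⟨iP, by simp [hTdef, hiP]⟩
        obtain ⟨i0, hi0T, hi0min⟩ := T.exists_min_image (fun i => l i / g' i) hTne
        have hi0pos : 0 < g' i0 := by
          have := hi0T; simp [hTdef] at this; exact this
        set t := l i0 / g' i0 with htdef
        have ht0 : 0 ≤ t := div_nonneg (hl0 i0) hi0pos.le
        set l' : ι → ℝ := fun i => l i - t * g' i with hl'def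
        have hl'0 : ∀ i, 0 ≤ l' i := by
          intro i
          rcases le_or_gt (g' i) 0 with hgi | hgi
          · have : t * g' i ≤ 0 := mul_nonpos_of_nonneg_of_nonpos ht0 hgi
            simp only [hl'def]; linarith [hl0 i]
          · have hiT : i ∈ T := by simp [hTdef, hgi]
            have hmin := hi0min i hiT
            rw [div_le_div_iff₀ hi0pos hgi] at hmin
            have h3 : t * g' i ≤ l i := by
              rw [htdef, div_mul_eq_mul_div, div_le_iff₀ hi0pos]
              linarith
            simp only [hl'def]
            linarith
        have hl'sum : ∑ i, l' i • M i = q := by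
          simp only [hl'def, sub_smul, Finset.sum_sub_distrib]
          rw [hlsum]
          have : ∑ i, (t * g' i) • M i = t • ∑ i, g' i • M i := by
            rw [Finset.smul_sum]
            congr 1; ext i; rw [smul_smul]
          rw [this, hg'sum, smul_zero, sub_zero]
        have hl'i0 : l' i0 = 0 := by
          simp only [hl'def, htdef]
          field_simp
          ring
        have hcard' : (Finset.univ.filter fun i => l' i ≠ 0).card ≤ N := by
          have hsub : (Finset.univ.filter fun i => l' i ≠ 0) ⊆ s.erase i0 := by
            intro i hi
            simp only [Finset.mem_filter, Finset.mem_univ, true_and] at hi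
            refine Finset.mem_erase.mpr ⟨?_, ?_⟩
            · rintro rfl; exact hi hl'i0
            · by_contra hns
              have h1 : l i = 0 := by
                by_contra hne; exact hns (by simp [hsdef, hne])
              have h2 : g' i = 0 := by
                by_contra hne; exact hns (hg'supp i hne)
              exact hi (by simp [hl'def, h1, h2])
          have h1 : (s.erase i0).card < s.card := by
            apply Finset.card_erase_lt_of_mem
            have : l i0 ≠ 0 ∨ True := by tauto
            -- i0 ∈ s : since i0 ∈ T means g' i0 > 0 hence g' i0 ≠ 0 hence i0 ∈ s
            exact hg'supp i0 (ne_of_gt hi0pos)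
          have h2 : (Finset.univ.filter fun i => l' i ≠ 0).card ≤ (s.erase i0).card :=
            Finset.card_le_card hsub
          omega
        exact ih l' hcard' hl'0 hl'sum
      rcases lt_or_gt_of_ne hgj0 with hneg | hpos
      · -- use -g'
        refine hwlog (fun i => -g' i) ?_ ⟨j0, ?_⟩ ?_
        · simp only [neg_smul, Finset.sum_neg_distrib]
          rw [hg'sum, neg_zero]
        · simp only [hg'def, j0.2, dif_pos]
          simpa using hneg
        · intro i hi
          by_contra hns
          apply hi
          simp [hg'def, hns]
      · refine hwlog g' ?_ ⟨j0, ?_⟩ ?_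
        · exact hg'sum
        · simp only [hg'def, j0.2, dif_pos]
          exact hpos
        · intro i hi
          by_contra hns
          apply hi
          simp [hg'def, hns]


/-- The finitely generated cone, as a set. -/
def coneOf {ι : Type*} [Fintype ι] (M : ι → E) : Set E :=
  {x | ∃ l : ι → ℝ, (∀ i, 0 ≤ l i) ∧ ∑ i, l i • M i = x}

theorem coneOf_convex {ι : Type*} [Fintype ι] (M : ι → E) : Convex ℝ (coneOf M) := by
  rintro x ⟨lx, hlx0, hlxsum⟩ y ⟨ly, hly0, hlysum⟩ a b ha hb _
  refine ⟨fun i => a * lx i + b * ly i, fun i => add_nonneg (mul_nonneg ha (hlx0 i)) (mul_nonneg hb (hly0 i)), ?_⟩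
  simp only [add_smul, Finset.sum_add_distrib, mul_smul]
  rw [← Finset.smul_sum, ← Finset.smul_sum, hlxsum, hlysum]

theorem coneOf_closed [FiniteDimensional ℝ E] {ι : Type*} [Fintype ι] [DecidableEq ι]
    (M : ι → E) : IsClosed (coneOf M) := by
  have key : coneOf M = ⋃ (s : Finset ι), ⋃ (_ : LinearIndependent ℝ (fun i : s => M (i : ι))),
      (fun l : s → ℝ => ∑ i : s, l i • M (i : ι)) '' {l | ∀ i, 0 ≤ l i} := by
    ext x
    constructor
    · intro hx
      obtain ⟨s, hindep, l, hl0, hlzero, hlsum⟩ := caratheodory_cone M x hx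
      refine Set.mem_iUnion.mpr ⟨s, Set.mem_iUnion.mpr ⟨hindep, ?_⟩⟩
      refine ⟨fun i => l i, fun i => hl0 i, ?_⟩
      show ∑ i : s, l (i:ι) • M (i:ι) = x
      rw [← hlsum, Finset.sum_coe_sort s (fun j => l j • M j)]
      exact Finset.sum_subset (Finset.subset_univ s)
        (fun i _ hi => by rw [hlzero i hi, zero_smul])
    · intro hx
      obtain ⟨s, hs⟩ := Set.mem_iUnion.mp hx
      obtain ⟨hindep, l, hl0, hlsum⟩ := Set.mem_iUnion.mp hs
      refine ⟨fun i => if h : i ∈ s then l ⟨i, h⟩ else 0, fun i => by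
        by_cases h : i ∈ s <;> simp [h, hl0 ⟨i, _⟩], ?_⟩
      rw [← hlsum]
      rw [← Finset.sum_subset (Finset.subset_univ s)]
      · rw [← Finset.sum_attach s (fun i => (if h : i ∈ s then l ⟨i, h⟩ else 0) • M i)]
        apply Finset.sum_congr rfl
        intro i _
        simp [i.2]
      · intro i _ hi
        simp [hi]
    
  rw [key]
  apply isClosed_iUnion_of_finite
  intro s
  apply isClosed_iUnion_of_finite
  intro hindep
  -- the map is an injective linear map
  set L : (s → ℝ) →ₗ[ℝ] E :=
    { toFun := fun l => ∑ i : s, l i • M (i : ι)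
      map_add' := by
        intro l1 l2
        simp [add_smul, Finset.sum_add_distrib]
      map_smul' := by
        intro c l
        simp [smul_smul, Finset.smul_sum] } with hLdef
  have hker : LinearMap.ker L = ⊥ := by
    rw [LinearMap.ker_eq_bot']
    intro m hm
    have := Fintype.linearIndependent_iff.mp hindep m hm
    funext i
    exact this i
  have horth : IsClosed {l : s → ℝ | ∀ i, 0 ≤ l i} := by
    have : {l : s → ℝ | ∀ i, 0 ≤ l i} = ⋂ i, {l : s → ℝ | 0 ≤ l i} := by
      ext; simp
    rw [this]
    exact isClosed_iInter fun i => isClosed_le continuous_const (continuous_apply i)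
  exact ((L.isClosedEmbedding_of_injective hker).isClosedMap) _ horth

/-- Homogeneous Farkas lemma: if `q` is not in the cone generated by the `M i`,
there is a linear functional nonpositive on all `M i` and positive at `q`. -/
theorem farkas [FiniteDimensional ℝ E] {ι : Type*} [Fintype ι] [DecidableEq ι]
    (M : ι → E) (q : E)
    (h : ¬ ∃ l : ι → ℝ, (∀ i, 0 ≤ l i) ∧ ∑ i, l i • M i = q) :
    ∃ φ : E →ₗ[ℝ] ℝ, (∀ i, φ (M i) ≤ 0) ∧ 0 < φ q := by
  have hq : q ∉ coneOf M := h
  obtain ⟨f, u, hfu, hufq⟩ :=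
    geometric_hahn_banach_closed_point (coneOf_convex M) (coneOf_closed M) hq
  have h0 : (0:E) ∈ coneOf M := ⟨fun _ => 0, fun _ => le_refl 0, by simp⟩
  have hu0 : 0 < u := by have := hfu 0 h0; simpa using this
  have hcone : ∀ z ∈ coneOf M, ∀ t : ℝ, 0 < t → t • z ∈ coneOf M := by
    rintro z ⟨l, hl0, hlsum⟩ t ht
    refine ⟨fun i => t * l i, fun i => mul_nonneg ht.le (hl0 i), ?_⟩
    simp only [mul_smul, ← Finset.smul_sum, hlsum]
  have hle0 : ∀ z ∈ coneOf M, f z ≤ 0 := by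
    intro z hz
    by_contra hpos
    push_neg at hpos
    have := hfu ((2 * u / f z) • z) (hcone z hz _ (div_pos (by linarith) hpos))
    rw [map_smul, smul_eq_mul, div_mul_cancel₀ _ (ne_of_gt hpos)] at this
    linarith
  refine ⟨(f : E →ₗ[ℝ] ℝ), fun i => ?_, ?_⟩
  · have hM : M i ∈ coneOf M := ⟨fun j => if j = i then 1 else 0, by
      intro j; by_cases h : j = i <;> simp [h], by simp⟩
    exact hle0 _ hM
  · show (0:ℝ) < f q
    linarith


/-- Affine Farkas lemma, with a representing bilinear pairing. -/
theorem affine_farkas [FiniteDimensional ℝ E]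
    (B : E →ₗ[ℝ] E →ₗ[ℝ] ℝ) (hsymm : ∀ x y, B x y = B y x)
    (hrep : ∀ φ : E →ₗ[ℝ] ℝ, ∃ z, ∀ x, φ x = B z x)
    {ι : Type*} [Fintype ι] [DecidableEq ι] (A : ι → E) (bb : ι → ℝ) (w : E) (β : ℝ)
    (z0 : E) (h0 : ∀ i, B (A i) z0 ≤ bb i)
    (hb : ∀ z, (∀ i, B (A i) z ≤ bb i) → B w z ≤ β) :
    ∃ l : ι → ℝ, (∀ i, 0 ≤ l i) ∧ (∑ i, l i • A i = w) ∧ ∑ i, l i * bb i ≤ β := by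
  classical
  -- work in E × ℝ with an extra slack generator
  set Mv : ι ⊕ Unit → E × ℝ := Sum.elim (fun i => (A i, bb i)) (fun _ => (0, 1)) with hMvdef
  by_cases hfeas : ∃ l : ι ⊕ Unit → ℝ, (∀ i, 0 ≤ l i) ∧ ∑ i, l i • Mv i = ((w, β) : E × ℝ)
  · obtain ⟨l, hl0, hlsum⟩ := hfeas
    rw [Fintype.sum_sum_type] at hlsum
    have hfst := congrArg Prod.fst hlsum
    have hsnd := congrArg Prod.snd hlsum
    simp only [Prod.fst_add, Prod.snd_add] at hfst hsnd
    have hfst_sum : (∑ i, l (Sum.inl i) • Mv (Sum.inl i)).1 = ∑ i, l (Sum.inl i) • A i := by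
      rw [Prod.fst_sum]
      apply Finset.sum_congr rfl
      intro i _
      simp [hMvdef]
    have hsnd_sum : (∑ i, l (Sum.inl i) • Mv (Sum.inl i)).2 = ∑ i, l (Sum.inl i) * bb i := by
      rw [Prod.snd_sum]
      apply Finset.sum_congr rfl
      intro i _
      simp [hMvdef]
    have hfst_sl : (∑ _i : Unit, l (Sum.inr _i) • Mv (Sum.inr _i)).1 = 0 := by
      simp [hMvdef]
    have hsnd_sl : (∑ _i : Unit, l (Sum.inr _i) • Mv (Sum.inr _i)).2 = l (Sum.inr ()) := by
      simp [hMvdef]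
    refine ⟨fun i => l (Sum.inl i), fun i => hl0 _, ?_, ?_⟩
    · rw [hfst_sum, hfst_sl] at hfst
      simpa using hfst
    · rw [hsnd_sum, hsnd_sl] at hsnd
      have := hl0 (Sum.inr ())
      linarith
  · obtain ⟨φ, hφle, hφq⟩ := farkas Mv ((w, β) : E × ℝ) hfeas
    exfalso
    set ψ : E →ₗ[ℝ] ℝ := φ.comp (LinearMap.inl ℝ E ℝ) with hψdef
    set τ : ℝ := φ ((0 : E), (1:ℝ)) with hτdef
    have hdecomp : ∀ (z : E) (s : ℝ), φ (z, s) = ψ z + s * τ := by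
      intro z s
      have h1 : ((z, s) : E × ℝ) = (z, 0) + s • ((0 : E), (1:ℝ)) := by
        simp [Prod.ext_iff]
      rw [h1, map_add, map_smul]
      simp [hψdef, smul_eq_mul]
      exact Or.inl hτdef.symm
    obtain ⟨zh, hzh⟩ := hrep ψ
    have hτ0 : τ ≤ 0 := by
      have := hφle (Sum.inr ())
      simpa [hMvdef, hτdef] using this
    have hrows : ∀ i, B (A i) zh + bb i * τ ≤ 0 := by
      intro i
      have := hφle (Sum.inl i)
      rw [hMvdef] at this
      simp only [Sum.elim_inl] at this
      rw [hdecomp, hzh] at this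
      rwa [hsymm zh (A i)] at this
    have htarget : 0 < B w zh + β * τ := by
      have := hφq
      rw [hdecomp, hzh] at this
      rwa [hsymm zh w] at this
    rcases lt_or_eq_of_le hτ0 with hτneg | hτeq
    · -- scale to get a feasible point violating the bound
      set z' := (-τ)⁻¹ • zh with hz'def
      have hmemz' : ∀ i, B (A i) z' ≤ bb i := by
        intro i
        rw [hz'def, map_smul, smul_eq_mul]
        have h1 := hrows i
        rw [inv_mul_le_iff₀ (by linarith : (0:ℝ) < -τ)]
        nlinarith
      have := hb z' hmemz'
      rw [hz'def, map_smul, smul_eq_mul] at this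
      rw [inv_mul_le_iff₀ (by linarith : (0:ℝ) < -τ)] at this
      nlinarith
    · -- recession direction
      have hslope : 0 < B w zh := by
        rw [hτeq] at htarget
        simpa using htarget
      set t := (β - B w z0 + 1) / B w zh with htdef
      have ht0 : 0 ≤ t := by
        have hz0b := hb z0 h0
        apply div_nonneg _ hslope.le
        linarith
      have hmem : ∀ i, B (A i) (z0 + t • zh) ≤ bb i := by
        intro i
        rw [map_add, map_smul, smul_eq_mul]
        have h1 := hrows i
        rw [hτeq] at h1
        simp only [mul_zero, add_zero] at h1
        nlinarith [h0 i, mul_nonneg ht0 (neg_nonneg.mpr h1)]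
      have := hb _ hmem
      rw [map_add, map_smul, smul_eq_mul, htdef, div_mul_cancel₀ _ (ne_of_gt hslope)] at this
      linarith


end RI

variable {n p : ℕ}

theorem sdot_add_right (u x y : Fin n → ℝ) : sdot u (x + y) = sdot u x + sdot u y := by
  simp [sdot, mul_add, Finset.sum_add_distrib]
theorem sdot_sub_right (u x y : Fin n → ℝ) : sdot u (x - y) = sdot u x - sdot u y := by
  simp [sdot, mul_sub, Finset.sum_sub_distrib]
theorem sdot_smul_right (a : ℝ) (u x : Fin n → ℝ) : sdot u (a • x) = a * sdot u x := by
  simp [sdot, Finset.mul_sum]; apply Finset.sum_congr rfl; intros; ring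
theorem sdot_add_left (u w x : Fin n → ℝ) : sdot (u + w) x = sdot u x + sdot w x := by
  simp [sdot, add_mul, Finset.sum_add_distrib]
theorem sdot_sub_left (u w x : Fin n → ℝ) : sdot (u - w) x = sdot u x - sdot w x := by
  simp [sdot, sub_mul, Finset.sum_sub_distrib]
theorem sdot_smul_left (a : ℝ) (u x : Fin n → ℝ) : sdot (a • u) x = a * sdot u x := by
  simp [sdot, Finset.mul_sum]; apply Finset.sum_congr rfl; intros; ring
theorem sdot_neg_left (u x : Fin n → ℝ) : sdot (-u) x = - sdot u x := by simp [sdot]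
theorem sdot_comm (u x : Fin n → ℝ) : sdot u x = sdot x u := by simp [sdot, mul_comm]
theorem sdot_zero_left (x : Fin n → ℝ) : sdot 0 x = 0 := by simp [sdot]
theorem sdot_zero_right (u : Fin n → ℝ) : sdot u 0 = 0 := by simp [sdot]

/-- `sdot` as a linear functional. -/
def sdotL (u : Fin n → ℝ) : (Fin n → ℝ) →ₗ[ℝ] ℝ where
  toFun := fun x => sdot u x
  map_add' := fun x y => sdot_add_right u x y
  map_smul' := fun a x => by simp [sdot_smul_right]

/-- The vector representing a linear functional. -/
def vecof (ψ : (Fin n → ℝ) →ₗ[ℝ] ℝ) : Fin n → ℝ := fun i => ψ (Pi.single i 1)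

theorem sdot_vecof (ψ : (Fin n → ℝ) →ₗ[ℝ] ℝ) (x : Fin n → ℝ) : sdot (vecof ψ) x = ψ x := by
  have hx : x = ∑ i, x i • (Pi.single i (1:ℝ) : Fin n → ℝ) := by
    have h1 : ∀ i, x i • (Pi.single i (1:ℝ) : Fin n → ℝ) = (Pi.single i (x i) : Fin n → ℝ) := by
      intro i
      ext j
      by_cases h : i = j <;> simp [Pi.single_apply, h]
    rw [Finset.sum_congr rfl fun i _ => h1 i, Finset.univ_sum_single]
  conv_rhs => rw [hx]
  rw [map_sum]
  simp only [map_smul, smul_eq_mul]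
  simp [sdot, vecof, mul_comm]

theorem sdot_sum_left {ι : Type*} (s : Finset ι) (l : ι → ℝ) (f : ι → Fin n → ℝ)
    (x : Fin n → ℝ) :
    sdot (∑ i ∈ s, l i • f i) x = ∑ i ∈ s, l i * sdot (f i) x := by
  induction s using Finset.cons_induction with
  | empty => simp [sdot]
  | cons i s his ih => rw [Finset.sum_cons, Finset.sum_cons, sdot_add_left, sdot_smul_left, ih]

/-- The common conclusion format: a splitting of `u` with finite bounds on the two conjugates. -/
def Concl (G1 G2 : Set ((Fin n → ℝ) × (Fin p → ℝ))) (u : Fin n → ℝ) (v : Fin p → ℝ)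
    (r : ℝ) : Prop :=
  ∃ u1 u2 : Fin n → ℝ, ∃ α1 α2 : ℝ, u1 + u2 = u ∧ α1 + α2 ≤ r ∧
    (∀ q ∈ G1, sdot u1 q.1 + sdot v q.2 ≤ α1) ∧
    (∀ q ∈ G2, sdot u2 q.1 + sdot v q.2 ≤ α2)

/-- Main separation machine: either we can split, or there is a functional separating
the effective domains (the vertical case). -/
theorem mmach {G1 G2 : Set ((Fin n → ℝ) × (Fin p → ℝ))} (hG1 : Convex ℝ G1)
    (hG2 : Convex ℝ G2) {u : Fin n → ℝ} {v : Fin p → ℝ} {r : ℝ} {xs : Fin n → ℝ}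
    {y1s y2s : Fin p → ℝ} (h1s : (xs, y1s) ∈ G1) (h2s : (xs, y2s) ∈ G2)
    (hyp : ∀ x y1 y2, (x, y1) ∈ G1 → (x, y2) ∈ G2 →
      sdot u x + sdot v y1 + sdot v y2 ≤ r) :
    Concl G1 G2 u v r ∨
      ∃ c : Fin n → ℝ,
        (∀ x1 y1 x2 y2, (x1, y1) ∈ G1 → (x2, y2) ∈ G2 → sdot c x1 ≤ sdot c x2) ∧
        (∃ x1 y1 x2 y2, (x1, y1) ∈ G1 ∧ (x2, y2) ∈ G2 ∧ sdot c x1 < sdot c x2) := by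
  classical
  set M : Set ((Fin n → ℝ) × ℝ) :=
    {w | ∃ x1 y1 x2 y2 t1 t2, (x1, y1) ∈ G1 ∧ (x2, y2) ∈ G2 ∧
      t1 ≤ sdot v y1 ∧ t2 ≤ sdot v y2 ∧ w = (x1 - x2, sdot u x1 + t1 + t2 - r)} with hMdef
  have hMne : M.Nonempty :=
    ⟨_, xs, y1s, xs, y2s, sdot v y1s, sdot v y2s, h1s, h2s, le_refl _, le_refl _, rfl⟩
  have hMconv : Convex ℝ M := by
    rintro w ⟨x1, y1, x2, y2, t1, t2, hx1, hx2, ht1, ht2, rfl⟩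
      w' ⟨x1', y1', x2', y2', t1', t2', hx1', hx2', ht1', ht2', rfl⟩ a b ha hb hab
    refine ⟨a • x1 + b • x1', a • y1 + b • y1', a • x2 + b • x2', a • y2 + b • y2',
      a * t1 + b * t1', a * t2 + b * t2', ?_, ?_, ?_, ?_, ?_⟩
    · exact hG1 hx1 hx1' ha hb hab
    · exact hG2 hx2 hx2' ha hb hab
    · rw [sdot_add_right, sdot_smul_right, sdot_smul_right]
      exact add_le_add (mul_le_mul_of_nonneg_left ht1 ha) (mul_le_mul_of_nonneg_left ht1' hb)
    · rw [sdot_add_right, sdot_smul_right, sdot_smul_right]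
      exact add_le_add (mul_le_mul_of_nonneg_left ht2 ha) (mul_le_mul_of_nonneg_left ht2' hb)
    · have h2 : sdot u (a • x1 + b • x1') = a * sdot u x1 + b * sdot u x1' := by
        rw [sdot_add_right, sdot_smul_right, sdot_smul_right]
      rw [Prod.ext_iff]
      constructor
      · show a • (x1 - x2) + b • (x1' - x2') = (a • x1 + b • x1') - (a • x2 + b • x2')
        module
      · show a * (sdot u x1 + t1 + t2 - r) + b * (sdot u x1' + t1' + t2' - r)
            = sdot u (a • x1 + b • x1') + (a * t1 + b * t1') + (a * t2 + b * t2') - r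
        rw [h2]
        linear_combination (-(r : ℝ)) * hab
  have hMdown : ∀ w ∈ M, ∀ δ : ℝ, 0 ≤ δ → (w.1, w.2 - δ) ∈ M := by
    rintro w ⟨x1, y1, x2, y2, t1, t2, hx1, hx2, ht1, ht2, rfl⟩ δ hδ
    exact ⟨x1, y1, x2, y2, t1 - δ, t2, hx1, hx2, by linarith, ht2, Prod.ext rfl (by dsimp only; ring)⟩
  have hM0 : ∀ s : ℝ, ((0 : Fin n → ℝ), s) ∈ M → s ≤ 0 := by
    rintro s ⟨x1, y1, x2, y2, t1, t2, hx1, hx2, ht1, ht2, heq⟩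
    rw [Prod.mk.injEq] at heq
    obtain ⟨h1, h2⟩ := heq
    have hx12 : x1 = x2 := by
      have := h1.symm
      rwa [sub_eq_zero] at this
    subst hx12
    have := hyp x1 y1 y2 hx1 hx2
    linarith
  have h0ri : (0 : (Fin n → ℝ) × ℝ) ∉ intrinsicInterior ℝ M := by
    intro h
    have h00 : ((0 : Fin n → ℝ), (0:ℝ)) ∈ M := by
      have := intrinsicInterior_subset h
      exact this
    have hdown : ((0 : Fin n → ℝ), (0:ℝ) - 1) ∈ M := hMdown _ h00 1 zero_le_one
    obtain ⟨ε, hεpos, hεmem⟩ := twosided h hdown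
    have : ((0 : Fin n → ℝ), ε) ∈ M := by
      have heq : (0 : (Fin n → ℝ) × ℝ) + ε • ((0 : (Fin n → ℝ) × ℝ) - ((0 : Fin n → ℝ), (0:ℝ) - 1))
          = ((0 : Fin n → ℝ), ε) := by
        simp [Prod.ext_iff]
      rwa [heq] at hεmem
    have := hM0 ε this
    linarith
  obtain ⟨φ, hφle, wh, hwhM, hwhlt⟩ := ps_point hMconv hMne h0ri
  set κ : ℝ := φ ((0 : Fin n → ℝ), (1:ℝ)) with hκdef
  set ψ : (Fin n → ℝ) →ₗ[ℝ] ℝ := φ.comp (LinearMap.inl ℝ (Fin n → ℝ) ℝ) with hψdef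
  have hdecomp : ∀ (w : Fin n → ℝ) (s : ℝ), φ (w, s) = ψ w + s * κ := by
    intro w s
    have h1 : ((w, s) : (Fin n → ℝ) × ℝ) = (w, 0) + s • ((0 : Fin n → ℝ), (1:ℝ)) := by
      simp [Prod.ext_iff]
    rw [h1, map_add, map_smul]
    simp [hψdef, smul_eq_mul]
    exact Or.inl hκdef.symm
  have hκ0 : 0 ≤ κ := by
    by_contra hneg
    push_neg at hneg
    obtain ⟨w0, hw0⟩ := hMne
    set δ := (1 + |φ w0|) / (-κ) with hδdef
    have hδpos : 0 < δ := div_pos (by positivity) (by linarith)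
    have hmem := hMdown w0 hw0 δ hδpos.le
    have hval := hφle _ hmem
    rw [hdecomp] at hval
    have hw0val : φ w0 = ψ w0.1 + w0.2 * κ := by
      rw [← hdecomp]
    have hκne : κ ≠ 0 := ne_of_lt hneg
    have hδκ : δ * (-κ) = 1 + |φ w0| := by
      rw [hδdef]; field_simp
    have hexp : (w0.2 - δ) * κ = w0.2 * κ - δ * κ := by ring
    have h2' : δ * κ = -(1 + |φ w0|) := by linarith
    linarith [neg_abs_le (φ w0)]
  rcases eq_or_lt_of_le hκ0 with hκeq | hκpos
  · -- κ = 0 : vertical separation of the domains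
    right
    refine ⟨vecof ψ, ?_, ?_⟩
    · intro x1 y1 x2 y2 h1 h2
      have hmem : ((x1 - x2, sdot u x1 + sdot v y1 + sdot v y2 - r) : (Fin n → ℝ) × ℝ) ∈ M :=
        ⟨x1, y1, x2, y2, _, _, h1, h2, le_refl _, le_refl _, rfl⟩
      have := hφle _ hmem
      rw [hdecomp, ← hκeq, mul_zero, add_zero, map_sub] at this
      rw [sdot_vecof, sdot_vecof]
      linarith
    · obtain ⟨x1, y1, x2, y2, t1, t2, h1, h2, ht1, ht2, heq⟩ := hwhM
      refine ⟨x1, y1, x2, y2, h1, h2, ?_⟩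
      rw [heq] at hwhlt
      rw [hdecomp, ← hκeq, mul_zero, add_zero, map_sub] at hwhlt
      rw [sdot_vecof, sdot_vecof]
      linarith
  · -- κ > 0 : splitting
    left
    set cv : Fin n → ℝ := vecof (κ⁻¹ • ψ) with hcvdef
    have hcv : ∀ x : Fin n → ℝ, sdot cv x = κ⁻¹ * ψ x := by
      intro x
      rw [hcvdef, sdot_vecof]
      simp
    have key : ∀ x1 y1 x2 y2, (x1, y1) ∈ G1 → (x2, y2) ∈ G2 →
        (sdot (u + cv) x1 + sdot v y1) + (sdot (-cv) x2 + sdot v y2) ≤ r := by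
      intro x1 y1 x2 y2 h1 h2
      have hmem : ((x1 - x2, sdot u x1 + sdot v y1 + sdot v y2 - r) : (Fin n → ℝ) × ℝ) ∈ M :=
        ⟨x1, y1, x2, y2, _, _, h1, h2, le_refl _, le_refl _, rfl⟩
      have hval := hφle _ hmem
      rw [hdecomp, map_sub] at hval
      -- ψ(x1-x2) + (sdot u x1 + sdot v y1 + sdot v y2 - r) * κ ≤ 0
      have hdiv : κ⁻¹ * ψ x1 - κ⁻¹ * ψ x2 + (sdot u x1 + sdot v y1 + sdot v y2 - r) ≤ 0 := by
        have hκne : κ ≠ 0 := ne_of_gt hκpos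
        have := mul_le_mul_of_nonneg_left hval (le_of_lt (inv_pos.mpr hκpos))
        rw [mul_zero] at this
        calc κ⁻¹ * ψ x1 - κ⁻¹ * ψ x2 + (sdot u x1 + sdot v y1 + sdot v y2 - r)
            = κ⁻¹ * ((ψ x1 - ψ x2) + (sdot u x1 + sdot v y1 + sdot v y2 - r) * κ) := by
              field_simp
          _ ≤ 0 := this
      rw [sdot_add_left, sdot_neg_left, hcv, hcv]
      linarith
    set Aset : Set ℝ := {a | ∃ x y, (x, y) ∈ G1 ∧ a = sdot (u + cv) x + sdot v y} with hAdef
    have hAne : Aset.Nonempty := ⟨_, xs, y1s, h1s, rfl⟩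
    have hAbdd : BddAbove Aset := by
      refine ⟨r - (sdot (-cv) xs + sdot v y2s), ?_⟩
      rintro a ⟨x, y, hxy, rfl⟩
      have := key x y xs y2s hxy h2s
      linarith
    set α1 := sSup Aset with hα1def
    refine ⟨u + cv, -cv, α1, r - α1, ?_, by linarith, ?_, ?_⟩
    · exact add_neg_cancel_right u cv
    · rintro ⟨x, y⟩ hq
      exact le_csSup hAbdd ⟨x, y, hq, rfl⟩
    · rintro ⟨x, y⟩ hq
      have : α1 ≤ r - (sdot (-cv) x + sdot v y) := by
        apply csSup_le hAne
        rintro a ⟨x', y', hx'y', rfl⟩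
        have := key x' y' x y hx'y' hq
        linarith
      linarith


/-- The effective domain (first projection) of a graph set. -/
def Dom (G : Set ((Fin n → ℝ) × (Fin p → ℝ))) : Set (Fin n → ℝ) := {x | ∃ y, (x, y) ∈ G}

theorem Dom_convex {G : Set ((Fin n → ℝ) × (Fin p → ℝ))} (hG : Convex ℝ G) :
    Convex ℝ (Dom G) := by
  rintro x1 ⟨y1, h1⟩ x2 ⟨y2, h2⟩ a b ha hb hab
  exact ⟨a • y1 + b • y2, hG h1 h2 ha hb hab⟩

/-- Case (a): both convex, relative interiors of the domains intersect. -/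
theorem caseA {G1 G2 : Set ((Fin n → ℝ) × (Fin p → ℝ))} (hG1 : Convex ℝ G1)
    (hG2 : Convex ℝ G2) {u : Fin n → ℝ} {v : Fin p → ℝ} {r : ℝ} {xs : Fin n → ℝ}
    (hx1 : xs ∈ intrinsicInterior ℝ (Dom G1)) (hx2 : xs ∈ intrinsicInterior ℝ (Dom G2))
    (hyp : ∀ x y1 y2, (x, y1) ∈ G1 → (x, y2) ∈ G2 →
      sdot u x + sdot v y1 + sdot v y2 ≤ r) :
    Concl G1 G2 u v r := by
  obtain ⟨y1s, h1s⟩ := intrinsicInterior_subset hx1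
  obtain ⟨y2s, h2s⟩ := intrinsicInterior_subset hx2
  rcases mmach hG1 hG2 h1s h2s hyp with h | ⟨c, hmono, x1h, y1h, x2h, y2h, hm1, hm2, hstrict⟩
  · exact h
  · exfalso
    have hconst1 : ∀ x ∈ Dom G1, sdotL c x = sdotL c xs := by
      apply ri_max hx1
      rintro x ⟨y, hy⟩
      exact hmono x y xs y2s hy h2s
    have hconst2 : ∀ x ∈ Dom G2, ((-1 : ℝ) • sdotL c) x = ((-1 : ℝ) • sdotL c) xs := by
      apply ri_max hx2
      rintro x ⟨y, hy⟩
      have := hmono xs y1s x y h1s hy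
      simp only [LinearMap.smul_apply, smul_eq_mul, neg_mul, one_mul, neg_le_neg_iff]
      exact this
    have e1 : sdot c x1h = sdot c xs := hconst1 x1h ⟨y1h, hm1⟩
    have e2 : ((-1:ℝ) • sdotL c) x2h = ((-1:ℝ) • sdotL c) xs := hconst2 x2h ⟨y2h, hm2⟩
    simp only [LinearMap.smul_apply, smul_eq_mul, neg_mul, one_mul, neg_inj] at e2
    have e2' : sdot c x2h = sdot c xs := e2
    linarith

/-- The pairing on `V × (Y × Y)`. -/
def B3 : (((Fin n → ℝ) × ((Fin p → ℝ) × (Fin p → ℝ)))) →ₗ[ℝ]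
    (((Fin n → ℝ) × ((Fin p → ℝ) × (Fin p → ℝ)))) →ₗ[ℝ] ℝ :=
  LinearMap.mk₂ ℝ (fun z w => sdot z.1 w.1 + sdot z.2.1 w.2.1 + sdot z.2.2 w.2.2)
    (fun m m' w => by simp [sdot_add_left]; ring)
    (fun c m w => by simp [sdot_smul_left]; ring)
    (fun m w w' => by simp [sdot_add_right]; ring)
    (fun c m w => by simp [sdot_smul_right]; ring)

theorem B3_symm : ∀ x y : ((Fin n → ℝ) × ((Fin p → ℝ) × (Fin p → ℝ))),
    B3 x y = B3 y x := by
  intro x y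
  simp [B3, LinearMap.mk₂_apply, sdot_comm x.1 y.1, sdot_comm x.2.1 y.2.1,
    sdot_comm x.2.2 y.2.2]

theorem B3_rep : ∀ φ : ((Fin n → ℝ) × ((Fin p → ℝ) × (Fin p → ℝ))) →ₗ[ℝ] ℝ,
    ∃ z, ∀ x, φ x = B3 z x := by
  intro φ
  refine ⟨(vecof (φ.comp (LinearMap.inl ℝ _ _)),
    vecof ((φ.comp (LinearMap.inr ℝ (Fin n → ℝ) _)).comp (LinearMap.inl ℝ _ _)),
    vecof ((φ.comp (LinearMap.inr ℝ (Fin n → ℝ) _)).comp (LinearMap.inr ℝ (Fin p → ℝ) _))), ?_⟩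
  rintro ⟨x, y1, y2⟩
  have hx : ((x, y1, y2) : (Fin n → ℝ) × ((Fin p → ℝ) × (Fin p → ℝ)))
      = (x, 0, 0) + (0, y1, 0) + (0, 0, y2) := by simp [Prod.ext_iff]
  rw [hx, map_add, map_add]
  simp only [B3, LinearMap.mk₂_apply, sdot_vecof]
  simp [LinearMap.comp_apply]
  rfl

/-- Case (c): both polyhedral, domains intersect. -/
theorem caseC {m1 m2 : ℕ} (a1 : Fin m1 → (Fin n → ℝ)) (c1 : Fin m1 → (Fin p → ℝ))
    (b1 : Fin m1 → ℝ) (a2 : Fin m2 → (Fin n → ℝ)) (c2 : Fin m2 → (Fin p → ℝ))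
    (b2 : Fin m2 → ℝ) {u : Fin n → ℝ} {v : Fin p → ℝ} {r : ℝ} {xs : Fin n → ℝ}
    {y1s y2s : Fin p → ℝ}
    (h1s : ∀ i, sdot (a1 i) xs + sdot (c1 i) y1s ≤ b1 i)
    (h2s : ∀ i, sdot (a2 i) xs + sdot (c2 i) y2s ≤ b2 i)
    (hyp : ∀ x y1 y2, (∀ i, sdot (a1 i) x + sdot (c1 i) y1 ≤ b1 i) →
      (∀ i, sdot (a2 i) x + sdot (c2 i) y2 ≤ b2 i) →
      sdot u x + sdot v y1 + sdot v y2 ≤ r) :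
    Concl {q | ∀ i, sdot (a1 i) q.1 + sdot (c1 i) q.2 ≤ b1 i}
          {q | ∀ i, sdot (a2 i) q.1 + sdot (c2 i) q.2 ≤ b2 i} u v r := by
  classical
  set A : (Fin m1 ⊕ Fin m2) → ((Fin n → ℝ) × ((Fin p → ℝ) × (Fin p → ℝ))) :=
    Sum.elim (fun j => (a1 j, c1 j, 0)) (fun k => (a2 k, 0, c2 k)) with hAdef
  set bb : (Fin m1 ⊕ Fin m2) → ℝ := Sum.elim b1 b2 with hbbdef
  have hBA : ∀ i z, B3 (A i) z = Sum.elim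
      (fun j => sdot (a1 j) z.1 + sdot (c1 j) z.2.1)
      (fun k => sdot (a2 k) z.1 + sdot (c2 k) z.2.2) i := by
    rintro (j | k) ⟨x, y1, y2⟩ <;>
      simp [hAdef, B3, LinearMap.mk₂_apply, sdot_zero_left]
  have h0 : ∀ i, B3 (A i) ((xs, y1s, y2s) : (Fin n → ℝ) × ((Fin p → ℝ) × (Fin p → ℝ))) ≤ bb i := by
    rintro (j | k)
    · rw [hBA]; simpa [hbbdef] using h1s j
    · rw [hBA]; simpa [hbbdef] using h2s k
  have hb : ∀ z, (∀ i, B3 (A i) z ≤ bb i) →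
      B3 ((u, v, v) : (Fin n → ℝ) × ((Fin p → ℝ) × (Fin p → ℝ))) z ≤ r := by
    rintro ⟨x, y1, y2⟩ hz
    have hr1 : ∀ j, sdot (a1 j) x + sdot (c1 j) y1 ≤ b1 j := by
      intro j; have := hz (Sum.inl j); rwa [hBA] at this
    have hr2 : ∀ k, sdot (a2 k) x + sdot (c2 k) y2 ≤ b2 k := by
      intro k; have := hz (Sum.inr k); rwa [hBA] at this
    have := hyp x y1 y2 hr1 hr2
    simpa [B3, LinearMap.mk₂_apply] using this
  obtain ⟨l, hl0, hlsum, hlb⟩ := affine_farkas B3 B3_symm B3_rep A bb ((u, v, v)) r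
    ((xs, y1s, y2s)) h0 hb
  · -- extract components and build the conclusion
    rw [Fintype.sum_sum_type] at hlsum hlb
    set l1 : Fin m1 → ℝ := fun j => l (Sum.inl j) with hl1def
    set l2 : Fin m2 → ℝ := fun k => l (Sum.inr k) with hl2def
    have hu : (∑ j, l1 j • a1 j) + (∑ k, l2 k • a2 k) = u := by
      have := congrArg Prod.fst hlsum
      simpa [Prod.fst_sum, Prod.snd_sum, hAdef] using this
    have hsnd := congrArg Prod.snd hlsum
    have hv1 : (∑ j, l1 j • c1 j) = v := by
      have := congrArg Prod.fst hsnd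
      simpa [Prod.fst_sum, Prod.snd_sum, hAdef] using this
    have hv2 : (∑ k, l2 k • c2 k) = v := by
      have := congrArg Prod.snd hsnd
      simpa [Prod.fst_sum, Prod.snd_sum, hAdef] using this
    refine ⟨∑ j, l1 j • a1 j, ∑ k, l2 k • a2 k, ∑ j, l1 j * b1 j, ∑ k, l2 k * b2 k,
      hu, by simpa [hbbdef] using hlb, ?_, ?_⟩
    · rintro ⟨x, y⟩ hq
      have hx : sdot (∑ j, l1 j • a1 j) x = ∑ j, l1 j * sdot (a1 j) x :=
        sdot_sum_left _ _ _ _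
      have hy : sdot v y = ∑ j, l1 j * sdot (c1 j) y := by
        rw [← hv1]; exact sdot_sum_left _ _ _ _
      simp only [hx, hy]
      rw [← Finset.sum_add_distrib]
      have : ∀ j ∈ Finset.univ, l1 j * sdot (a1 j) x + l1 j * sdot (c1 j) y
          ≤ l1 j * b1 j := by
        intro j _
        rw [← mul_add]
        exact mul_le_mul_of_nonneg_left (hq j) (hl0 (Sum.inl j))
      exact Finset.sum_le_sum this
    · rintro ⟨x, y⟩ hq
      have hx : sdot (∑ k, l2 k • a2 k) x = ∑ k, l2 k * sdot (a2 k) x :=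
        sdot_sum_left _ _ _ _
      have hy : sdot v y = ∑ k, l2 k * sdot (c2 k) y := by
        rw [← hv2]; exact sdot_sum_left _ _ _ _
      simp only [hx, hy]
      rw [← Finset.sum_add_distrib]
      have : ∀ k ∈ Finset.univ, l2 k * sdot (a2 k) x + l2 k * sdot (c2 k) y
          ≤ l2 k * b2 k := by
        intro k _
        rw [← mul_add]
        exact mul_le_mul_of_nonneg_left (hq k) (hl0 (Sum.inr k))
      exact Finset.sum_le_sum this


/-- The pairing on `V × Y`. -/
def B2 : ((Fin n → ℝ) × (Fin p → ℝ)) →ₗ[ℝ] ((Fin n → ℝ) × (Fin p → ℝ)) →ₗ[ℝ] ℝ :=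
  LinearMap.mk₂ ℝ (fun z w => sdot z.1 w.1 + sdot z.2 w.2)
    (fun m m' w => by simp [sdot_add_left]; ring)
    (fun c m w => by simp [sdot_smul_left]; ring)
    (fun m w w' => by simp [sdot_add_right]; ring)
    (fun c m w => by simp [sdot_smul_right]; ring)

theorem B2_symm : ∀ x y : ((Fin n → ℝ) × (Fin p → ℝ)), B2 x y = B2 y x := by
  intro x y
  simp [B2, LinearMap.mk₂_apply, sdot_comm x.1 y.1, sdot_comm x.2 y.2]

theorem B2_rep : ∀ φ : ((Fin n → ℝ) × (Fin p → ℝ)) →ₗ[ℝ] ℝ, ∃ z, ∀ x, φ x = B2 z x := by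
  intro φ
  refine ⟨(vecof (φ.comp (LinearMap.inl ℝ _ _)), vecof (φ.comp (LinearMap.inr ℝ _ _))), ?_⟩
  rintro ⟨x, y⟩
  have hx : ((x, y) : (Fin n → ℝ) × (Fin p → ℝ)) = (x, 0) + (0, y) := by simp
  rw [hx, map_add]
  simp only [B2, LinearMap.mk₂_apply, sdot_vecof]
  simp [LinearMap.comp_apply]


/-- Case (b) auxiliary, by strong induction on the dimension of the affine hull of
the polyhedral domain. -/
theorem caseB_aux : ∀ (d : ℕ) (ι : Type) (_ : Fintype ι)
    {G1 : Set ((Fin n → ℝ) × (Fin p → ℝ))} (_ : Convex ℝ G1)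
    (a : ι → (Fin n → ℝ)) (c : ι → (Fin p → ℝ)) (b : ι → ℝ)
    (u : Fin n → ℝ) (v : Fin p → ℝ) (r : ℝ) (xs : Fin n → ℝ) (y1s y2s : Fin p → ℝ),
    (xs, y1s) ∈ G1 →
    (∀ i, sdot (a i) xs + sdot (c i) y2s ≤ b i) →
    xs ∈ intrinsicInterior ℝ (Dom G1) →
    (∀ x y1 y2, (x, y1) ∈ G1 → (∀ i, sdot (a i) x + sdot (c i) y2 ≤ b i) →
      sdot u x + sdot v y1 + sdot v y2 ≤ r) →
    finrank ℝ (vectorSpan ℝ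
      (Dom {q : (Fin n → ℝ) × (Fin p → ℝ) | ∀ i, sdot (a i) q.1 + sdot (c i) q.2 ≤ b i})) ≤ d →
    Concl G1 {q | ∀ i, sdot (a i) q.1 + sdot (c i) q.2 ≤ b i} u v r := by
  intro d
  induction d using Nat.strong_induction_on with
  | _ d ih =>
  intro ι instι G1 hG1 a c b u v r xs y1s y2s h1s h2s hxs hyp hd
  classical
  set G2 : Set ((Fin n → ℝ) × (Fin p → ℝ)) :=
    {q | ∀ i, sdot (a i) q.1 + sdot (c i) q.2 ≤ b i} with hG2def
  have hG2conv : Convex ℝ G2 := by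
    rintro q1 hq1 q2 hq2 α β hα hβ hαβ i
    have e1 : sdot (a i) (α • q1.1 + β • q2.1) + sdot (c i) (α • q1.2 + β • q2.2)
        = α * (sdot (a i) q1.1 + sdot (c i) q1.2) + β * (sdot (a i) q2.1 + sdot (c i) q2.2) := by
      rw [sdot_add_right, sdot_add_right, sdot_smul_right, sdot_smul_right,
        sdot_smul_right, sdot_smul_right]
      ring
    show sdot (a i) (α • q1 + β • q2).1 + sdot (c i) (α • q1 + β • q2).2 ≤ b i
    have hfst : (α • q1 + β • q2).1 = α • q1.1 + β • q2.1 := rfl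
    have hsnd : (α • q1 + β • q2).2 = α • q1.2 + β • q2.2 := rfl
    rw [hfst, hsnd, e1]
    have h1 := hq1 i
    have h2 := hq2 i
    calc α * (sdot (a i) q1.1 + sdot (c i) q1.2) + β * (sdot (a i) q2.1 + sdot (c i) q2.2)
        ≤ α * b i + β * b i :=
          add_le_add (mul_le_mul_of_nonneg_left h1 hα) (mul_le_mul_of_nonneg_left h2 hβ)
      _ = b i := by rw [← add_mul, hαβ, one_mul]
  have h2smem : ((xs, y2s) : (Fin n → ℝ) × (Fin p → ℝ)) ∈ G2 := h2s
  rcases mmach hG1 hG2conv h1s h2smem hyp with h | ⟨cv, hmono, x1h, y1h, x2h, y2h, hm1, hm2, hstrict⟩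
  · exact h
  · -- vertical case: restrict to the hyperplane and recurse
    have hconst1 : ∀ x ∈ Dom G1, sdotL cv x = sdotL cv xs :=
      ri_max hxs (fun x hx => by
        obtain ⟨y, hy⟩ := hx
        exact hmono x y xs y2s hy h2smem)
    set cst := sdot cv xs with hcstdef
    have hconstG1 : ∀ x y, (x, y) ∈ G1 → sdot cv x = cst := by
      intro x y h
      exact hconst1 x ⟨y, h⟩
    have hx2h : cst < sdot cv x2h := by
      have h1 := hconstG1 _ _ hm1
      linarith
    -- new rows
    set a' : ι ⊕ Bool → (Fin n → ℝ) := Sum.elim a (fun s => if s then cv else -cv) with ha'def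
    set c' : ι ⊕ Bool → (Fin p → ℝ) := Sum.elim c (fun _ => 0) with hc'def
    set b' : ι ⊕ Bool → ℝ := Sum.elim b (fun s => if s then cst else -cst) with hb'def
    set G2' : Set ((Fin n → ℝ) × (Fin p → ℝ)) :=
      {q | ∀ i, sdot (a' i) q.1 + sdot (c' i) q.2 ≤ b' i} with hG2'def
    have hG2'mem : ∀ q : (Fin n → ℝ) × (Fin p → ℝ),
        q ∈ G2' ↔ q ∈ G2 ∧ sdot cv q.1 = cst := by
      intro q
      constructor
      · intro h
        refine ⟨fun i => by simpa [ha'def, hc'def, hb'def] using h (Sum.inl i), ?_⟩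
        have h1 := h (Sum.inr true)
        have h2 := h (Sum.inr false)
        simp only [ha'def, hc'def, hb'def, Sum.elim_inr, if_pos, if_neg, Bool.false_eq_true,
          ite_true, ite_false, sdot_zero_left, sdot_neg_left, add_zero] at h1 h2
        linarith
      · rintro ⟨hq, heq⟩ (i | s)
        · simpa [ha'def, hc'def, hb'def] using hq i
        · cases s <;>
            simp [ha'def, hc'def, hb'def, sdot_zero_left, sdot_neg_left, heq]
    -- dimension drop
    have hsub : Dom G2' ⊆ Dom G2 := by
      rintro x ⟨y, hy⟩
      exact ⟨y, ((hG2'mem (x, y)).mp hy).1⟩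
    have hle : vectorSpan ℝ (Dom G2') ≤ vectorSpan ℝ (Dom G2) := vectorSpan_mono ℝ hsub
    have hker : vectorSpan ℝ (Dom G2') ≤ LinearMap.ker (sdotL cv) := by
      rw [vectorSpan_def, Submodule.span_le]
      rintro w ⟨x1, hx1, x2, hx2, rfl⟩
      obtain ⟨y1', hy1'⟩ := hx1
      obtain ⟨y2', hy2'⟩ := hx2
      have e1 := ((hG2'mem (x1, y1')).mp hy1').2
      have e2 := ((hG2'mem (x2, y2')).mp hy2').2
      have : sdotL cv (x1 -ᵥ x2) = 0 := by
        show sdot cv (x1 - x2) = 0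
        rw [sdot_sub_right]
        rw [show sdot cv x1 = cst from e1, show sdot cv x2 = cst from e2]
        ring
      simpa using this
    have hx2hD : x2h ∈ Dom G2 := ⟨y2h, hm2⟩
    have hxsD : xs ∈ Dom G2 := ⟨y2s, h2smem⟩
    have hebig : x2h - xs ∈ vectorSpan ℝ (Dom G2) := by
      have := vsub_mem_vectorSpan ℝ hx2hD hxsD
      simpa using this
    have hesmall : x2h - xs ∉ vectorSpan ℝ (Dom G2') := by
      intro hmem
      have := hker hmem
      rw [LinearMap.mem_ker] at this
      have : sdot cv (x2h - xs) = 0 := this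
      rw [sdot_sub_right] at this
      rw [← hcstdef] at this
      linarith
    have hlt : vectorSpan ℝ (Dom G2') < vectorSpan ℝ (Dom G2) :=
      SetLike.lt_iff_le_and_exists.mpr ⟨hle, x2h - xs, hebig, hesmall⟩
    have hrank : finrank ℝ (vectorSpan ℝ (Dom G2')) < d :=
      lt_of_lt_of_le (Submodule.finrank_lt_finrank_of_lt hlt) hd
    -- apply the induction hypothesis
    have h2s' : ∀ i, sdot (a' i) xs + sdot (c' i) y2s ≤ b' i := by
      have : ((xs, y2s) : (Fin n → ℝ) × (Fin p → ℝ)) ∈ G2' :=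
        (hG2'mem _).mpr ⟨h2smem, rfl⟩
      exact this
    have hyp' : ∀ x y1 y2, (x, y1) ∈ G1 → (∀ i, sdot (a' i) x + sdot (c' i) y2 ≤ b' i) →
        sdot u x + sdot v y1 + sdot v y2 ≤ r := by
      intro x y1 y2 hx hrows
      have : ((x, y2) : (Fin n → ℝ) × (Fin p → ℝ)) ∈ G2' := hrows
      exact hyp x y1 y2 hx ((hG2'mem _).mp this).1
    obtain ⟨u1', u2', α1', α2', hsum', hle', hb1', hb2'⟩ :=
      ih _ hrank (ι ⊕ Bool) inferInstance hG1 a' c' b' u v r xs y1s y2s h1s h2s' hxs hyp'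
        (le_refl _)
    -- upgrade the bound from G2' to G2 via affine Farkas
    have h0F : ∀ i, B2 ((a' i, c' i) : (Fin n → ℝ) × (Fin p → ℝ)) ((xs, y2s)) ≤ b' i := by
      intro i
      have := h2s' i
      simpa [B2, LinearMap.mk₂_apply] using this
    have hbF : ∀ z : (Fin n → ℝ) × (Fin p → ℝ),
        (∀ i, B2 ((a' i, c' i) : (Fin n → ℝ) × (Fin p → ℝ)) z ≤ b' i) →
        B2 ((u2', v) : (Fin n → ℝ) × (Fin p → ℝ)) z ≤ α2' := by
      rintro ⟨x, y⟩ hz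
      have hmem : ((x, y) : (Fin n → ℝ) × (Fin p → ℝ)) ∈ G2' := by
        intro i
        have := hz i
        simpa [B2, LinearMap.mk₂_apply] using this
      have := hb2' _ hmem
      simpa [B2, LinearMap.mk₂_apply] using this
    obtain ⟨l, hl0, hlsum, hlb⟩ := affine_farkas B2 B2_symm B2_rep
      (fun i : ι ⊕ Bool => ((a' i, c' i) : (Fin n → ℝ) × (Fin p → ℝ))) b' ((u2', v)) α2'
      ((xs, y2s)) h0F hbF
    rw [Fintype.sum_sum_type, Fintype.sum_bool] at hlsum hlb
    set τ : ℝ := l (Sum.inr true) - l (Sum.inr false) with hτdef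
    have hfst : (∑ i, l (Sum.inl i) • a i) + τ • cv = u2' := by
      have := congrArg Prod.fst hlsum
      simp only [Prod.fst_add, Prod.fst_sum, ha'def, hc'def, Sum.elim_inl, Sum.elim_inr,
        Prod.smul_mk, if_pos, Bool.false_eq_true, if_neg, ite_true, ite_false] at this
      rw [← this, hτdef, sub_smul, smul_neg]
      abel
    have hsnd : (∑ i, l (Sum.inl i) • c i) = v := by
      have := congrArg Prod.snd hlsum
      simp only [Prod.snd_add, Prod.snd_sum, ha'def, hc'def, Sum.elim_inl, Sum.elim_inr,
        Prod.smul_mk, smul_zero, add_zero, ite_self] at this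
      simpa using this
    have hbsum : (∑ i, l (Sum.inl i) * b i) + τ * cst ≤ α2' := by
      have : (∑ i, l (Sum.inl i) * b' (Sum.inl i))
          + (l (Sum.inr true) * b' (Sum.inr true) + l (Sum.inr false) * b' (Sum.inr false))
          ≤ α2' := hlb
      simp only [hb'def, Sum.elim_inl, Sum.elim_inr, if_pos, if_neg, Bool.false_eq_true,
        ite_true, ite_false] at this
      rw [hτdef]
      nlinarith
    refine ⟨u1' + τ • cv, u2' - τ • cv, α1' + τ * cst, α2' - τ * cst, ?_, by linarith, ?_, ?_⟩
    · rw [← hsum']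
      abel
    · rintro ⟨x, y⟩ hq
      have h1 := hb1' (x, y) hq
      have h2 := hconstG1 x y hq
      rw [sdot_add_left, sdot_smul_left]
      dsimp at h1 h2 ⊢
      rw [h2]
      linarith
    · rintro ⟨x, y⟩ hq
      have hu2'' : u2' - τ • cv = ∑ i, l (Sum.inl i) • a i := by
        rw [← hfst]; abel
      rw [hu2'']
      have hx : sdot (∑ i, l (Sum.inl i) • a i) x = ∑ i, l (Sum.inl i) * sdot (a i) x :=
        sdot_sum_left _ _ _ _
      have hy : sdot v y = ∑ i, l (Sum.inl i) * sdot (c i) y := by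
        rw [← hsnd]; exact sdot_sum_left _ _ _ _
      dsimp
      rw [hx, hy, ← Finset.sum_add_distrib]
      have hsum_le : ∑ i, (l (Sum.inl i) * sdot (a i) x + l (Sum.inl i) * sdot (c i) y)
          ≤ ∑ i, l (Sum.inl i) * b i := by
        apply Finset.sum_le_sum
        intro i _
        rw [← mul_add]
        exact mul_le_mul_of_nonneg_left (hq i) (hl0 (Sum.inl i))
      linarith


end SumRule

open SumRule in
/-- Fenchel conjugate sum rule for set-valued mappings in finite dimensions. -/
theorem svConj_sum_rule {n p : ℕ} (F1 F2 : (Fin n → ℝ) → Set (Fin p → ℝ))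
    (u : Fin n → ℝ) (v : Fin p → ℝ) :
    svConj (fun x => F1 x + F2 x) u v ≤
      sInf {z : EReal | ∃ u1 u2, u1 + u2 = u ∧ z = svConj F1 u1 v + svConj F2 u2 v} ∧
    ((Convex ℝ {q : (Fin n → ℝ) × (Fin p → ℝ) | q.2 ∈ F1 q.1} ∧
        Convex ℝ {q : (Fin n → ℝ) × (Fin p → ℝ) | q.2 ∈ F2 q.1} ∧
        (intrinsicInterior ℝ (sdom F1) ∩ intrinsicInterior ℝ (sdom F2)).Nonempty) ∨
      (Convex ℝ {q : (Fin n → ℝ) × (Fin p → ℝ) | q.2 ∈ F1 q.1} ∧ IsPolyMap F2 ∧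
        (intrinsicInterior ℝ (sdom F1) ∩ sdom F2).Nonempty) ∨
      (IsPolyMap F1 ∧ IsPolyMap F2 ∧ (sdom F1 ∩ sdom F2).Nonempty) →
      svConj (fun x => F1 x + F2 x) u v =
        sInf {z : EReal | ∃ u1 u2, u1 + u2 = u ∧ z = svConj F1 u1 v + svConj F2 u2 v} ∧
      (∀ r : ℝ, svConj (fun x => F1 x + F2 x) u v = (r : EReal) →
        ∃ u1 u2, u1 + u2 = u ∧
          svConj (fun x => F1 x + F2 x) u v = svConj F1 u1 v + svConj F2 u2 v)) := by
  classical
  set G1 : Set ((Fin n → ℝ) × (Fin p → ℝ)) := {q | q.2 ∈ F1 q.1} with hG1def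
  set G2 : Set ((Fin n → ℝ) × (Fin p → ℝ)) := {q | q.2 ∈ F2 q.1} with hG2def
  have hdom1 : Dom G1 = sdom F1 := rfl
  have hdom2 : Dom G2 = sdom F2 := rfl
  set S : Set EReal :=
    {z | ∃ u1 u2, u1 + u2 = u ∧ z = svConj F1 u1 v + svConj F2 u2 v} with hSdef
  -- easy direction
  have heasy : svConj (fun x => F1 x + F2 x) u v ≤ sInf S := by
    apply le_sInf
    rintro z ⟨u1, u2, hu, rfl⟩
    apply sSup_le
    rintro e ⟨⟨x, y⟩, hq, rfl⟩
    obtain ⟨y1, hy1, y2, hy2, hyy⟩ := Set.mem_add.mp hq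
    have hyy' : y1 + y2 = y := hyy
    have hy1' : y1 ∈ F1 x := hy1
    have hy2' : y2 ∈ F2 x := hy2
    have he : sdot u x + sdot v y
        = (sdot u1 x + sdot v y1) + (sdot u2 x + sdot v y2) := by
      rw [← hu, ← hyy', sdot_add_left, sdot_add_right]
      ring
    have h1 : ((sdot u1 x + sdot v y1 : ℝ) : EReal) ≤ svConj F1 u1 v :=
      le_sSup ⟨(x, y1), hy1', rfl⟩
    have h2 : ((sdot u2 x + sdot v y2 : ℝ) : EReal) ≤ svConj F2 u2 v :=
      le_sSup ⟨(x, y2), hy2', rfl⟩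
    calc ((sdot u x + sdot v y : ℝ) : EReal)
        = ((sdot u1 x + sdot v y1 : ℝ) : EReal) + ((sdot u2 x + sdot v y2 : ℝ) : EReal) := by
          rw [he]; exact EReal.coe_add _ _
      _ ≤ svConj F1 u1 v + svConj F2 u2 v := add_le_add h1 h2
  refine ⟨heasy, fun hCQ => ?_⟩
  -- a common domain point
  have hcommon : ∃ xs y1s y2s, (xs, y1s) ∈ G1 ∧ (xs, y2s) ∈ G2 := by
    rcases hCQ with ⟨_, _, ⟨xs, hxs1, hxs2⟩⟩ | ⟨_, _, ⟨xs, hxs1, hxs2⟩⟩ | ⟨_, _, ⟨xs, hxs1, hxs2⟩⟩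
    · obtain ⟨y1s, h1⟩ := intrinsicInterior_subset hxs1
      obtain ⟨y2s, h2⟩ := intrinsicInterior_subset hxs2
      exact ⟨xs, y1s, y2s, h1, h2⟩
    · obtain ⟨y1s, h1⟩ := intrinsicInterior_subset hxs1
      obtain ⟨y2s, h2⟩ := hxs2
      exact ⟨xs, y1s, y2s, h1, h2⟩
    · obtain ⟨y1s, h1⟩ := hxs1
      obtain ⟨y2s, h2⟩ := hxs2
      exact ⟨xs, y1s, y2s, h1, h2⟩
  obtain ⟨xs, y1s, y2s, h1s, h2s⟩ := hcommon
  -- the key step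
  have hkey : ∀ r : ℝ, svConj (fun x => F1 x + F2 x) u v = (r : EReal) →
      ∃ u1 u2 : Fin n → ℝ, u1 + u2 = u ∧
        svConj F1 u1 v + svConj F2 u2 v ≤ (r : EReal) := by
    intro r hr
    have hyp : ∀ x y1 y2, (x, y1) ∈ G1 → (x, y2) ∈ G2 →
        sdot u x + sdot v y1 + sdot v y2 ≤ r := by
      intro x y1 y2 hy1 hy2
      have hmem : y1 + y2 ∈ F1 x + F2 x := Set.add_mem_add hy1 hy2
      have hle : ((sdot u x + sdot v (y1 + y2) : ℝ) : EReal)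
          ≤ svConj (fun x => F1 x + F2 x) u v := le_sSup ⟨(x, y1 + y2), hmem, rfl⟩
      rw [hr, EReal.coe_le_coe_iff] at hle
      rw [sdot_add_right] at hle
      linarith
    have hconcl : Concl G1 G2 u v r := by
      rcases hCQ with ⟨hc1, hc2, ⟨zs, hzs1, hzs2⟩⟩ | ⟨hc1, hpoly2, ⟨zs, hzs1, hzs2⟩⟩
        | ⟨hpoly1, hpoly2, _⟩
      · rw [← hdom1] at hzs1
        rw [← hdom2] at hzs2
        exact caseA hc1 hc2 hzs1 hzs2 hyp
      · obtain ⟨m, a, c, b, heq⟩ := hpoly2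
        have hG2eq : G2 = {q | ∀ i, sdot (a i) q.1 + sdot (c i) q.2 ≤ b i} := heq
        rw [← hdom1] at hzs1
        obtain ⟨y2z, hy2z⟩ := hzs2
        have hy2z' : ((zs, y2z) : (Fin n → ℝ) × (Fin p → ℝ)) ∈ G2 := hy2z
        rw [hG2eq] at hy2z'
        obtain ⟨y1z, hy1z⟩ := intrinsicInterior_subset hzs1
        have hyp' : ∀ x y1 y2, (x, y1) ∈ G1 →
            (∀ i, sdot (a i) x + sdot (c i) y2 ≤ b i) →
            sdot u x + sdot v y1 + sdot v y2 ≤ r := by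
          intro x y1 y2 hxy1 hrows
          apply hyp x y1 y2 hxy1
          rw [hG2def, Set.mem_setOf_eq]
          have : ((x, y2) : (Fin n → ℝ) × (Fin p → ℝ)) ∈ G2 := by
            rw [hG2eq]; exact hrows
          exact this
        have := caseB_aux _ (Fin m) inferInstance hc1 a c b u v r zs y1z y2z hy1z hy2z'
          hzs1 hyp' (le_refl _)
        rw [hG2eq]
        exact this
      · obtain ⟨m1, a1, c1, b1, heq1⟩ := hpoly1
        obtain ⟨m2, a2, c2, b2, heq2⟩ := hpoly2
        have hG1eq : G1 = {q | ∀ i, sdot (a1 i) q.1 + sdot (c1 i) q.2 ≤ b1 i} := heq1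
        have hG2eq : G2 = {q | ∀ i, sdot (a2 i) q.1 + sdot (c2 i) q.2 ≤ b2 i} := heq2
        have h1s' : ∀ i, sdot (a1 i) xs + sdot (c1 i) y1s ≤ b1 i := by
          have : ((xs, y1s) : (Fin n → ℝ) × (Fin p → ℝ)) ∈ G1 := h1s
          rw [hG1eq] at this; exact this
        have h2s' : ∀ i, sdot (a2 i) xs + sdot (c2 i) y2s ≤ b2 i := by
          have : ((xs, y2s) : (Fin n → ℝ) × (Fin p → ℝ)) ∈ G2 := h2s
          rw [hG2eq] at this; exact this
        have hyp' : ∀ x y1 y2, (∀ i, sdot (a1 i) x + sdot (c1 i) y1 ≤ b1 i) →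
            (∀ i, sdot (a2 i) x + sdot (c2 i) y2 ≤ b2 i) →
            sdot u x + sdot v y1 + sdot v y2 ≤ r := by
          intro x y1 y2 hr1 hr2
          apply hyp
          · show ((x, y1) : (Fin n → ℝ) × (Fin p → ℝ)) ∈ G1
            rw [hG1eq]; exact hr1
          · show ((x, y2) : (Fin n → ℝ) × (Fin p → ℝ)) ∈ G2
            rw [hG2eq]; exact hr2
        have := caseC a1 c1 b1 a2 c2 b2 (xs := xs) (y1s := y1s) (y2s := y2s)
          h1s' h2s' hyp'
        rw [hG1eq, hG2eq]
        exact this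
    obtain ⟨u1, u2, α1, α2, hsum, hle, hb1, hb2⟩ := hconcl
    refine ⟨u1, u2, hsum, ?_⟩
    have hφ1 : svConj F1 u1 v ≤ (α1 : EReal) := by
      apply sSup_le
      rintro e ⟨⟨x, y⟩, hq, rfl⟩
      exact EReal.coe_le_coe_iff.mpr (hb1 (x, y) hq)
    have hφ2 : svConj F2 u2 v ≤ (α2 : EReal) := by
      apply sSup_le
      rintro e ⟨⟨x, y⟩, hq, rfl⟩
      exact EReal.coe_le_coe_iff.mpr (hb2 (x, y) hq)
    calc svConj F1 u1 v + svConj F2 u2 v ≤ (α1 : EReal) + (α2 : EReal) := add_le_add hφ1 hφ2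
      _ = ((α1 + α2 : ℝ) : EReal) := (EReal.coe_add _ _).symm
      _ ≤ (r : EReal) := EReal.coe_le_coe_iff.mpr hle
  constructor
  · -- equality
    by_cases htop : svConj (fun x => F1 x + F2 x) u v = ⊤
    · refine le_antisymm heasy ?_
      rw [htop]
      exact le_top
    · have hbot : svConj (fun x => F1 x + F2 x) u v ≠ ⊥ := by
        intro hb
        have : ((sdot u xs + sdot v (y1s + y2s) : ℝ) : EReal)
            ≤ svConj (fun x => F1 x + F2 x) u v :=
          le_sSup ⟨(xs, y1s + y2s), Set.add_mem_add h1s h2s, rfl⟩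
        rw [hb, le_bot_iff] at this
        exact EReal.coe_ne_bot _ this
      set r := (svConj (fun x => F1 x + F2 x) u v).toReal with hrdef
      have hrr : svConj (fun x => F1 x + F2 x) u v = (r : EReal) :=
        (EReal.coe_toReal htop hbot).symm
      obtain ⟨u1, u2, hsum, hle⟩ := hkey r hrr
      refine le_antisymm heasy ?_
      have hinS : svConj F1 u1 v + svConj F2 u2 v ∈ S := ⟨u1, u2, hsum, rfl⟩
      calc sInf S ≤ svConj F1 u1 v + svConj F2 u2 v := sInf_le hinS
        _ ≤ (r : EReal) := hle
        _ = svConj (fun x => F1 x + F2 x) u v := hrr.symm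
  · -- attainment
    intro r hr
    obtain ⟨u1, u2, hsum, hle⟩ := hkey r hr
    refine ⟨u1, u2, hsum, le_antisymm ?_ ?_⟩
    · calc svConj (fun x => F1 x + F2 x) u v ≤ sInf S := heasy
        _ ≤ svConj F1 u1 v + svConj F2 u2 v := sInf_le ⟨u1, u2, hsum, rfl⟩
    · rw [hr]
      exact hle

end
end
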